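/- arXiv:2605.31253 — 3 statements merged into one kernel-verified Lean document; each statement's English description precedes it below -/
import Mathlib

section
/- For two agents whose true valuations are unary additive (over any number m of goods), Standard-E-C-E always has a pure Nash equilibrium whose induced allocation is EF1 with respect to the true valuations. -/
/-!
Formalization of the strategic Envy-Cycle-Elimination (E-C-E) setting.

There are `n` agents and `m` goods (`Fin m`), with the predefined ordering of agents
and goods given by the orders on `Fin n` and `Fin m`.  A bid consists of a reported
additive valuation (a nonnegative value for every good) together with a preference
list (a permutation of the goods).  E-C-E starts from empty bundles and, while
unallocated goods remain, selects a source of the envy graph (according to the rule of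
the respective variant), adds one unallocated good to that agent's bundle (again
according to the rule of the respective variant), and then repeatedly eliminates envy
cycles, in a fixed order, until the envy graph has a source.
-/

open scoped Classical
open Finset

/-- A bid of an agent: a reported additive valuation (a nonnegative value for every
good) together with a preference list, a permutation of the goods. -/
structure Bid (m : ℕ) where
  val : Fin m → ℝ
  nonneg : ∀ g, 0 ≤ val g
  pref : Equiv.Perm (Fin m)

namespace ECE

variable {n m : ℕ}

/-- Reported (additive) value of a bundle. -/
noncomputable def bval (b : Bid m) (S : Finset (Fin m)) : ℝ := ∑ g ∈ S, b.val g

/-- (True, additive) value of a bundle under the valuation `v`. -/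
noncomputable def value (v : Fin m → ℝ) (S : Finset (Fin m)) : ℝ := ∑ g ∈ S, v g

/-- Envy-graph edge: agent `i` envies agent `j` (w.r.t. the reported valuations) under
the partial allocation `P`. -/
def envies (b : Fin n → Bid m) (P : Fin n → Finset (Fin m)) (i j : Fin n) : Prop :=
  bval (b i) (P i) < bval (b i) (P j)

/-- The sources (vertices of in-degree 0) of the envy graph. -/
noncomputable def sources (b : Fin n → Bid m) (P : Fin n → Finset (Fin m)) :
    Finset (Fin n) :=
  univ.filter fun i => ∀ j, ¬ envies b P j i

/-- The envy cycles of the current envy graph, represented as cyclic permutations `σ`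
of the agents such that every agent moved by `σ` envies her image under `σ`. -/
noncomputable def cycleSet (b : Fin n → Bid m) (P : Fin n → Finset (Fin m)) :
    Finset (Equiv.Perm (Fin n)) :=
  univ.filter fun σ => σ.IsCycle ∧ ∀ i, σ i ≠ i → envies b P i (σ i)

/-- A fixed enumeration of the permutations of the agents, providing the fixed
(lexicographic) order in which envy cycles are eliminated. -/
noncomputable def permIdx (n : ℕ) :
    Equiv.Perm (Fin n) ≃ Fin (Fintype.card (Equiv.Perm (Fin n))) :=
  Fintype.equivFin _

/-- Eliminate one envy cycle (the first one in the fixed order): every agent on the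
cycle receives the bundle of the agent she envies. -/
noncomputable def elimOnce (b : Fin n → Bid m) (P : Fin n → Finset (Fin m)) :
    Fin n → Finset (Fin m) :=
  if h : (cycleSet b P).Nonempty then
    let σ := (permIdx n).symm (((cycleSet b P).image (permIdx n)).min' (h.image _))
    fun i => P (σ i)
  else P

/-- Repeatedly eliminate envy cycles until the envy graph has a source. -/
noncomputable def resolve (b : Fin n → Bid m) :
    ℕ → (Fin n → Finset (Fin m)) → Fin n → Finset (Fin m)
  | 0, P => P
  | fuel + 1, P => if (sources b P).Nonempty then P else resolve b fuel (elimOnce b P)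

/-- The state (current partial allocation, remaining unallocated goods) of an E-C-E
run after a given number of steps.  In each step, if unallocated goods remain, the
agent chosen by `pickAgent` (a source of the envy graph) receives the good chosen by
`pickItem`, and afterwards envy cycles are eliminated until the graph has a source. -/
noncomputable def stateECE (b : Fin n → Bid m)
    (pickAgent : (Fin n → Finset (Fin m)) → Option (Fin n))
    (pickItem : Fin n → (R : Finset (Fin m)) → R.Nonempty → Fin m) :
    ℕ → (Fin n → Finset (Fin m)) × Finset (Fin m)
  | 0 => (fun _ => ∅, univ)
  | k + 1 =>
    let s := stateECE b pickAgent pickItem k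
    if hR : s.2.Nonempty then
      match pickAgent s.1 with
      | none => s
      | some i =>
        let g := pickItem i s.2 hR
        (resolve b (n * n + 1) (fun j => if j = i then insert g (s.1 j) else s.1 j),
          s.2.erase g)
    else s

/-- Source selection of Standard-E-C-E: among multiple sources, the agent earliest in
the predefined ordering of the agents. -/
noncomputable def stdAgent (b : Fin n → Bid m) (P : Fin n → Finset (Fin m)) :
    Option (Fin n) :=
  if h : (sources b P).Nonempty then some ((sources b P).min' h) else none

/-- Source selection of the Priority variants: among multiple sources, those having at
least one outgoing envy edge have priority, ties broken by the predefined ordering of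
the agents. -/
noncomputable def priAgent (b : Fin n → Bid m) (P : Fin n → Finset (Fin m)) :
    Option (Fin n) :=
  if h' : ((sources b P).filter fun i => ∃ j, envies b P i j).Nonempty then
    some (((sources b P).filter fun i => ∃ j, envies b P i j).min' h')
  else if h : (sources b P).Nonempty then some ((sources b P).min' h) else none

/-- The unallocated good of highest reported value, ties broken by the predefined
ordering of the goods. -/
noncomputable def bestItem (v : Fin m → ℝ) (R : Finset (Fin m)) (hR : R.Nonempty) :
    Fin m :=
  (R.filter fun g => ∀ g' ∈ R, v g' ≤ v g).min' (by
    obtain ⟨g, hg, hmax⟩ := R.exists_max_image v hR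
    exact ⟨g, mem_filter.2 ⟨hg, hmax⟩⟩)

/-- The earliest unallocated good in the preference list `pref`. -/
noncomputable def preferredItem (pref : Equiv.Perm (Fin m)) (R : Finset (Fin m))
    (hR : R.Nonempty) : Fin m :=
  pref.symm ((R.image pref).min' (hR.image _))

/-- Standard-E-C-E: sources chosen by the predefined agent ordering, goods assigned in
the predefined ordering of the goods. -/
noncomputable def Standard (b : Fin n → Bid m) : Fin n → Finset (Fin m) :=
  (stateECE b (stdAgent b) (fun _ R hR => R.min' hR) m).1

/-- Priority-E-C-E: envious sources have priority (ties broken by the agent ordering),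
goods assigned in the predefined ordering of the goods. -/
noncomputable def Priority (b : Fin n → Bid m) : Fin n → Finset (Fin m) :=
  (stateECE b (priAgent b) (fun _ R hR => R.min' hR) m).1

/-- Best-Item-E-C-E: envious sources have priority, and the chosen agent receives her
unallocated good of highest reported value (ties broken by the good ordering). -/
noncomputable def BestItemECE (b : Fin n → Bid m) : Fin n → Finset (Fin m) :=
  (stateECE b (priAgent b) (fun i R hR => bestItem (b i).val R hR) m).1

/-- Preferred-Item-E-C-E: envious sources have priority, and the chosen agent receives
the earliest unallocated good in her preference list. -/
noncomputable def PreferredItemECE (b : Fin n → Bid m) : Fin n → Finset (Fin m) :=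
  (stateECE b (priAgent b) (fun i R hR => preferredItem (b i).pref R hR) m).1

/-- The allocation `A` is `α`-EF1 from agent `i`'s perspective w.r.t. the valuation
`v`: for every agent `j` with nonempty bundle there is a good `g ∈ A j` with
`v (A i) ≥ α · v (A j \ {g})`. -/
def EF1From (α : ℝ) (v : Fin m → ℝ) (A : Fin n → Finset (Fin m)) (i : Fin n) : Prop :=
  ∀ j : Fin n, (A j).Nonempty → ∃ g ∈ A j, α * value v ((A j).erase g) ≤ value v (A i)

/-- The allocation `A` is EF1 w.r.t. the valuations `v`. -/
def IsEF1 (v : Fin n → Fin m → ℝ) (A : Fin n → Finset (Fin m)) : Prop :=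
  ∀ i : Fin n, EF1From 1 (v i) A i

/-- Agent `i`'s bid in the profile `b` is a best response to the others' bids, w.r.t.
her true (additive) valuation `v`: no alternative bid gives her a bundle of strictly
larger true value. -/
def BestResponse (Mech : (Fin n → Bid m) → Fin n → Finset (Fin m))
    (v : Fin m → ℝ) (b : Fin n → Bid m) (i : Fin n) : Prop :=
  ∀ b' : Bid m, value v (Mech (Function.update b i b') i) ≤ value v (Mech b i)

/-- The bid profile `b` is a pure Nash equilibrium of the mechanism `Mech` w.r.t. the
true (additive) valuations `v`. -/
def IsPNE (Mech : (Fin n → Bid m) → Fin n → Finset (Fin m))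
    (v : Fin n → Fin m → ℝ) (b : Fin n → Bid m) : Prop :=
  ∀ i : Fin n, BestResponse Mech (v i) b i

end ECE

open ECE

/-!
Agent 1 bids her true unary valuation and agent 0 bids `2 ^ m + 2 ^ g` on good `g`, which ranks
bundles by size and breaks ties in favour of the bundle holding the latest good. With two agents,
eliminating envy cycles only ever swaps the two bundles, and induction over the rounds shows:
* whatever agent 0 bids, a unary bid of agent 1 keeps `|A₀| ≤ |A₁| + 1`;
* whatever agent 1 bids, the bid of agent 0 keeps `|A₁| ≤ |A₀|`: when agent 1's bundle catches up
  in size it holds the latest good, so agent 0 envies her and agent 1 is never the chosen source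
  while the sizes are equal.
So this profile gives agent 0 `⌈m/2⌉` and agent 1 `⌊m/2⌋` goods, neither can get more by deviating,
and bundle sizes differing by at most one is EF1 for unary valuations.
-/

namespace ECE

variable {m : ℕ}

def MutualEnvy (b : Fin 2 → Bid m) (P : Fin 2 → Finset (Fin m)) : Prop :=
  envies b P 0 1 ∧ envies b P 1 0

noncomputable def resolveTwo (b : Fin 2 → Bid m) (P : Fin 2 → Finset (Fin m)) :
    Fin 2 → Finset (Fin m) :=
  if MutualEnvy b P then P ∘ Equiv.swap 0 1 else P

def give (P : Fin 2 → Finset (Fin m)) (i : Fin 2) (g : Fin m) : Fin 2 → Finset (Fin m) :=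
  fun j => if j = i then insert g (P j) else P j

lemma perm_fin_two_eq_one_or_eq_swap (σ : Equiv.Perm (Fin 2)) : σ = 1 ∨ σ = Equiv.swap 0 1 := by
  revert σ
  decide

section TwoAgents

variable {b : Fin 2 → Bid m}

lemma mem_sources_fin_two {P : Fin 2 → Finset (Fin m)} {i : Fin 2} :
    i ∈ sources b P ↔ ¬ envies b P (Equiv.swap 0 1 i) i := by
  fin_cases i <;> simp [sources, Fin.forall_fin_two, envies]

lemma sources_nonempty_iff_not_mutualEnvy {P : Fin 2 → Finset (Fin m)} :
    (sources b P).Nonempty ↔ ¬ MutualEnvy b P := by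
  simp only [Finset.Nonempty, mem_sources_fin_two, Fin.exists_fin_two, MutualEnvy,
    Equiv.swap_apply_left, Equiv.swap_apply_right]
  tauto

lemma stdAgent_eq_some {P : Fin 2 → Finset (Fin m)} (h : ¬ MutualEnvy b P) :
    stdAgent b P = some (if envies b P 1 0 then 1 else 0) := by
  have hne := sources_nonempty_iff_not_mutualEnvy.2 h
  rw [stdAgent, dif_pos hne]
  congr 1
  split_ifs with h10
  · have h0 : (0 : Fin 2) ∉ sources b P := by simpa [mem_sources_fin_two] using h10
    exact Fin.eq_one_of_ne_zero _ fun h => h0 (h ▸ min'_mem _ hne)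
  · exact le_antisymm (min'_le _ _ (by simpa [mem_sources_fin_two] using h10)) (Fin.zero_le _)

lemma cycleSet_eq_of_mutualEnvy {P : Fin 2 → Finset (Fin m)} (h : MutualEnvy b P) :
    cycleSet b P = {Equiv.swap 0 1} := by
  ext σ
  rcases perm_fin_two_eq_one_or_eq_swap σ with rfl | rfl
  · simp [cycleSet, Equiv.Perm.not_isCycle_one,
      (by decide : (1 : Equiv.Perm (Fin 2)) ≠ Equiv.swap 0 1)]
  · simp [cycleSet, Equiv.Perm.isCycle_swap, Fin.forall_fin_two, h.1, h.2]

lemma elimOnce_eq_of_mutualEnvy {P : Fin 2 → Finset (Fin m)} (h : MutualEnvy b P) :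
    elimOnce b P = P ∘ Equiv.swap 0 1 := by
  simp only [elimOnce, cycleSet_eq_of_mutualEnvy h, image_singleton, min'_singleton,
    Equiv.symm_apply_apply]
  rfl

lemma not_mutualEnvy_comp_swap {P : Fin 2 → Finset (Fin m)} (h : MutualEnvy b P) :
    ¬ MutualEnvy b (P ∘ Equiv.swap 0 1) :=
  fun h' => h.1.not_gt (by simpa [envies] using h'.1)

lemma not_mutualEnvy_resolveTwo (P : Fin 2 → Finset (Fin m)) :
    ¬ MutualEnvy b (resolveTwo b P) := by
  unfold resolveTwo
  split_ifs with h
  · exact not_mutualEnvy_comp_swap h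
  · exact h

lemma resolve_eq_resolveTwo (fuel : ℕ) (P : Fin 2 → Finset (Fin m)) :
    resolve b (fuel + 2) P = resolveTwo b P := by
  by_cases h : MutualEnvy b P
  · have hswap := sources_nonempty_iff_not_mutualEnvy.2 (not_mutualEnvy_comp_swap h)
    simp [resolve, resolveTwo, h, sources_nonempty_iff_not_mutualEnvy,
      elimOnce_eq_of_mutualEnvy, hswap]
  · simp [resolve, resolveTwo, h, sources_nonempty_iff_not_mutualEnvy]

lemma resolveTwo_eq_or (P : Fin 2 → Finset (Fin m)) :
    resolveTwo b P = P ∨ MutualEnvy b P ∧ resolveTwo b P = P ∘ Equiv.swap 0 1 := by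
  unfold resolveTwo
  split_ifs with h <;> simp [h]

lemma exists_resolveTwo_apply_eq (P : Fin 2 → Finset (Fin m)) (i : Fin 2) :
    ∃ j, resolveTwo b P i = P j := by
  rcases resolveTwo_eq_or (b := b) P with h | ⟨-, h⟩ <;> simp [h]

lemma card_resolveTwo_add (P : Fin 2 → Finset (Fin m)) :
    #(resolveTwo b P 0) + #(resolveTwo b P 1) = #(P 0) + #(P 1) := by
  rcases resolveTwo_eq_or (b := b) P with h | ⟨-, h⟩ <;> simp [h, add_comm]

end TwoAgents

section Give

variable {P : Fin 2 → Finset (Fin m)} {i j : Fin 2} {g x : Fin m}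

@[simp] lemma give_self : give P i g i = insert g (P i) := if_pos rfl

@[simp] lemma give_of_ne (h : j ≠ i) : give P i g j = P j := if_neg h

lemma mem_give : x ∈ give P i g j → x = g ∨ x ∈ P j := by
  unfold give
  split_ifs <;> simp +contextual

lemma card_give_add (hg : ∀ j, g ∉ P j) :
    #(give P i g 0) + #(give P i g 1) = #(P 0) + #(P 1) + 1 := by
  fin_cases i <;> simp [card_insert_of_notMem (hg _)] <;> omega

end Give

noncomputable abbrev stdRun (b : Fin 2 → Bid m) : ℕ → (Fin 2 → Finset (Fin m)) × Finset (Fin m) :=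
  stateECE b (stdAgent b) (fun _ R hR => R.min' hR)

lemma standard_eq_stdRun (b : Fin 2 → Bid m) : Standard b = (stdRun b m).1 := rfl

lemma stdRun_succ {b : Fin 2 → Bid m} {k : ℕ} (hk : k < m)
    (hR : (stdRun b k).2 = univ.filter (fun g => k ≤ g.val))
    (hP : ¬ MutualEnvy b (stdRun b k).1) :
    stdRun b (k + 1) =
      (resolveTwo b (give (stdRun b k).1 (if envies b (stdRun b k).1 1 0 then 1 else 0) ⟨k, hk⟩),
        (stdRun b k).2.erase ⟨k, hk⟩) := by
  have hmin : ∀ hne, (stdRun b k).2.min' hne = ⟨k, hk⟩ := fun hne =>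
    le_antisymm (min'_le _ _ (by simp [hR])) (le_min' _ _ _ (by simp [hR, Fin.le_def]))
  have hne : (stdRun b k).2.Nonempty := ⟨⟨k, hk⟩, by simp [hR]⟩
  show stateECE _ _ _ (k + 1) = _
  rw [stateECE.eq_2, dif_pos hne, stdAgent_eq_some hP]
  simp only [hmin, ← resolve_eq_resolveTwo 3]
  rfl

lemma stdRun_invariant (b : Fin 2 → Bid m) {k : ℕ} (hk : k ≤ m) :
    (stdRun b k).2 = univ.filter (fun g => k ≤ g.val) ∧
    (∀ i, ∀ g ∈ (stdRun b k).1 i, g.val < k) ∧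
    #((stdRun b k).1 0) + #((stdRun b k).1 1) = k ∧
    ¬ MutualEnvy b (stdRun b k).1 := by
  induction k with
  | zero => simp [stateECE, MutualEnvy, envies]
  | succ k ih =>
    obtain ⟨hR, hlt, hcard, hN⟩ := ih (Nat.le_of_succ_le hk)
    have hfresh : ∀ j, (⟨k, hk⟩ : Fin m) ∉ (stdRun b k).1 j := fun j h => (hlt j _ h).false
    rw [stdRun_succ hk hR hN]
    refine ⟨?_, fun i x hx => ?_, ?_, not_mutualEnvy_resolveTwo _⟩
    · ext x
      simp [hR, Fin.ext_iff]
      omega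
    · obtain ⟨j, hj⟩ := exists_resolveTwo_apply_eq (b := b) (give _ _ ⟨k, hk⟩) i
      dsimp only at hx
      rw [hj] at hx
      rcases mem_give hx with rfl | hx
      · exact Nat.lt_succ_self k
      · exact Nat.lt_succ_of_lt (hlt j x hx)
    · rw [card_resolveTwo_add, card_give_add hfresh, hcard]

lemma notMem_stdRun {b : Fin 2 → Bid m} {k : ℕ} (hk : k < m) (j : Fin 2) :
    (⟨k, hk⟩ : Fin m) ∉ (stdRun b k).1 j :=
  fun h => ((stdRun_invariant b hk.le).2.1 j _ h).false

lemma stdRun_succ_fst {b : Fin 2 → Bid m} {k : ℕ} (hk : k < m) :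
    (stdRun b (k + 1)).1 = resolveTwo b
      (give (stdRun b k).1 (if envies b (stdRun b k).1 1 0 then 1 else 0) ⟨k, hk⟩) := by
  obtain ⟨hR, -, -, hN⟩ := stdRun_invariant b hk.le
  rw [stdRun_succ hk hR hN]

lemma card_standard_add (b : Fin 2 → Bid m) : #(Standard b 0) + #(Standard b 1) = m :=
  (stdRun_invariant b le_rfl).2.2.1

noncomputable def unaryBid (m : ℕ) : Bid m := ⟨fun _ => 1, fun _ => zero_le_one, Equiv.refl _⟩

lemma envies_iff_card_lt {b : Fin 2 → Bid m} {P : Fin 2 → Finset (Fin m)} {i j : Fin 2}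
    (hb : b i = unaryBid m) : envies b P i j ↔ #(P i) < #(P j) := by
  simp [envies, bval, hb, unaryBid]

lemma card_stdRun_zero_le_of_unaryBid {b : Fin 2 → Bid m} (hb : b 1 = unaryBid m) {k : ℕ}
    (hk : k ≤ m) : #((stdRun b k).1 0) ≤ #((stdRun b k).1 1) + 1 := by
  induction k with
  | zero => simp [stateECE]
  | succ k ih =>
    have ih := ih (Nat.le_of_succ_le hk)
    have hcard := fun j => card_insert_of_notMem (notMem_stdRun (b := b) hk j)
    rw [stdRun_succ_fst hk]
    set P := (stdRun b k).1
    by_cases h10 : envies b P 1 0 <;> simp only [h10, if_true, if_false] <;>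
      rw [envies_iff_card_lt hb] at h10 <;> unfold resolveTwo <;> split_ifs with hQ <;>
      simp [MutualEnvy, envies_iff_card_lt hb, hcard] at hQ ⊢ <;> omega

noncomputable def tieBreakBid (m : ℕ) : Bid m :=
  ⟨fun g => ((2 ^ m + 2 ^ (g : ℕ) : ℕ) : ℝ), fun _ => Nat.cast_nonneg _, Equiv.refl _⟩

lemma bval_tieBreakBid (S : Finset (Fin m)) :
    bval (tieBreakBid m) S = ((#S * 2 ^ m + ∑ g ∈ S, 2 ^ (g : ℕ) : ℕ) : ℝ) := by
  simp [bval, tieBreakBid, sum_add_distrib]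

lemma sum_two_pow_lt {S : Finset (Fin m)} {k : ℕ} (hS : ∀ g ∈ S, g.val < k) :
    ∑ g ∈ S, 2 ^ (g : ℕ) < 2 ^ k := by
  simpa using Nat.geomSum_lt (s := S.map Fin.valEmbedding) le_rfl (by simpa using hS)

lemma bval_tieBreakBid_lt_of_card_lt {A B : Finset (Fin m)} (h : #A < #B) :
    bval (tieBreakBid m) A < bval (tieBreakBid m) B := by
  have hA := sum_two_pow_lt (S := A) (k := m) fun g _ => g.isLt
  have hB : (#A + 1) * 2 ^ m ≤ #B * 2 ^ m := Nat.mul_le_mul_right _ h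
  rw [add_one_mul] at hB
  rw [bval_tieBreakBid, bval_tieBreakBid, Nat.cast_lt]
  omega

lemma bval_tieBreakBid_lt_insert {A B : Finset (Fin m)} {g : Fin m} (hA : ∀ x ∈ A, x < g)
    (hg : g ∉ B) (h : #A ≤ #B + 1) :
    bval (tieBreakBid m) A < bval (tieBreakBid m) (insert g B) := by
  have hA := sum_two_pow_lt (S := A) (k := g) hA
  have hB : #A * 2 ^ m ≤ (#B + 1) * 2 ^ m := Nat.mul_le_mul_right _ h
  rw [bval_tieBreakBid, bval_tieBreakBid, Nat.cast_lt, card_insert_of_notMem hg, sum_insert hg]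
  omega

lemma card_stdRun_one_le_of_tieBreakBid {b : Fin 2 → Bid m} (hb : b 0 = tieBreakBid m) {k : ℕ}
    (hk : k ≤ m) :
    #((stdRun b k).1 1) ≤ #((stdRun b k).1 0) ∧
      (#((stdRun b k).1 1) = #((stdRun b k).1 0) → ¬ envies b (stdRun b k).1 1 0) := by
  induction k with
  | zero => simp [stateECE, envies]
  | succ k ih =>
    obtain ⟨hle, htie⟩ := ih (Nat.le_of_succ_le hk)
    have hfresh := notMem_stdRun (b := b) hk
    have hlt : ∀ x ∈ (stdRun b k).1 0, x < ⟨k, hk⟩ :=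
      (stdRun_invariant b (Nat.le_of_succ_le hk)).2.1 0
    rw [stdRun_succ_fst hk]
    set P := (stdRun b k).1
    have hcard := fun j => card_insert_of_notMem (hfresh j)
    by_cases h10 : envies b P 1 0
    · rw [if_pos h10]
      have hlt' : #(P 1) < #(P 0) := lt_of_le_of_ne hle fun h => htie h h10
      rcases resolveTwo_eq_or (b := b) (give P 1 ⟨k, hk⟩) with h | ⟨⟨h01, h10'⟩, h⟩
      · have hQ := not_mutualEnvy_resolveTwo (b := b) (give P 1 ⟨k, hk⟩)
        rw [h] at hQ ⊢
        refine ⟨by simp [hcard]; omega, fun heq henvy => hQ ⟨?_, henvy⟩⟩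
        simp only [envies, hb, give_self, give_of_ne zero_ne_one]
        exact bval_tieBreakBid_lt_insert hlt (hfresh 1) (by simp [hcard] at heq; omega)
      · rw [h]
        have hsize : #(P 0) ≤ #(P 1) + 1 := by
          simp only [envies, hb, give_self, give_of_ne zero_ne_one] at h01
          have := mt bval_tieBreakBid_lt_of_card_lt h01.not_gt
          simp [hcard] at this
          omega
        refine ⟨by simp [hcard]; omega, fun _ => ?_⟩
        simp only [envies, Function.comp_apply, Equiv.swap_apply_left, Equiv.swap_apply_right]
        exact h10'.not_gt
    · rw [if_neg h10]
      have h01 : ¬ envies b (give P 0 ⟨k, hk⟩) 0 1 := by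
        simp only [envies, hb, give_self, give_of_ne one_ne_zero, not_lt]
        exact (bval_tieBreakBid_lt_of_card_lt (by simp [hcard]; omega)).le
      rw [resolveTwo, if_neg fun h => h01 h.1]
      simp [hcard]
      omega

lemma card_standard_zero_le_half {b : Fin 2 → Bid m} (hb : b 1 = unaryBid m) :
    #(Standard b 0) ≤ (m + 1) / 2 := by
  have hle := card_stdRun_zero_le_of_unaryBid hb le_rfl
  have hadd := card_standard_add b
  rw [standard_eq_stdRun] at hadd ⊢
  omega

lemma card_standard_one_le_half {b : Fin 2 → Bid m} (hb : b 0 = tieBreakBid m) :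
    #(Standard b 1) ≤ m / 2 := by
  have hle := (card_stdRun_one_le_of_tieBreakBid hb le_rfl).1
  have hadd := card_standard_add b
  rw [standard_eq_stdRun] at hadd ⊢
  omega

noncomputable def equilibriumProfile (m : ℕ) : Fin 2 → Bid m := ![tieBreakBid m, unaryBid m]

lemma card_standard_equilibriumProfile :
    #(Standard (equilibriumProfile m) 0) = (m + 1) / 2 ∧
      #(Standard (equilibriumProfile m) 1) = m / 2 := by
  have h0 := card_standard_zero_le_half (b := equilibriumProfile m) rfl
  have h1 := card_standard_one_le_half (b := equilibriumProfile m) rfl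
  have hadd := card_standard_add (equilibriumProfile m)
  omega

lemma value_const_one (S : Finset (Fin m)) : value (fun _ => 1) S = #S := by
  simp [value]

lemma isEF1_const_one_of_card_le {n : ℕ} {A : Fin n → Finset (Fin m)}
    (h : ∀ i j, #(A j) ≤ #(A i) + 1) : IsEF1 (fun _ _ => 1) A := by
  rintro i j ⟨g, hg⟩
  refine ⟨g, hg, ?_⟩
  rw [one_mul, value_const_one, value_const_one, card_erase_of_mem hg]
  exact_mod_cast (by have := h i j; omega : #(A j) - 1 ≤ #(A i))

end ECE

/-- For two agents with unary additive true valuations (over any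
number `m` of goods), Standard-E-C-E always has a pure Nash equilibrium whose induced
allocation is EF1 with respect to the true valuations. -/
theorem standard_two_unary_PNE_exists (m : ℕ) :
    ∃ b : Fin 2 → Bid m,
      IsPNE Standard (fun _ _ => (1 : ℝ)) b ∧
      IsEF1 (fun _ _ => (1 : ℝ)) (Standard b) := by
  obtain ⟨h0, h1⟩ := card_standard_equilibriumProfile (m := m)
  refine ⟨equilibriumProfile m, fun i b' => ?_, isEF1_const_one_of_card_le fun i j => ?_⟩
  · rw [value_const_one, value_const_one, Nat.cast_le]
    fin_cases i
    · exact h0 ▸ card_standard_zero_le_half (by simp [equilibriumProfile])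
    · exact h1 ▸ card_standard_one_le_half (by simp [equilibriumProfile])
  · fin_cases i <;> fin_cases j <;> simp [h0, h1] <;> omega
end

section
/- For the instance with exactly 2 agents whose true valuations are unary additive and exactly 3 goods, Best-Item-E-C-E has no pure Nash equilibrium: for every bid profile (b_1, b_2) there is an agent i and an alternative bid b'_i such that agent i's true value for her bundle under (b'_i, b_{-i}) is strictly greater than under (b_1, b_2). -/
/-!
Formalization of the strategic Envy-Cycle-Elimination (E-C-E) setting.

There are `n` agents and `m` goods (`Fin m`), with the predefined ordering of agents
and goods given by the orders on `Fin n` and `Fin m`.  A bid consists of a reported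
additive valuation (a nonnegative value for every good) together with a preference
list (a permutation of the goods).  E-C-E starts from empty bundles and, while
unallocated goods remain, selects a source of the envy graph (according to the rule of
the respective variant), adds one unallocated good to that agent's bundle (again
according to the rule of the respective variant), and then repeatedly eliminates envy
cycles, in a fixed order, until the envy graph has a source.
-/

open scoped Classical
open Finset

/-!
The two bundles of the final allocation are disjoint, so some agent holds at most one of the
three goods; it suffices that each agent has a deviation securing two goods.

Agent 1 reports 3 for the good `g` that agent 0 values most and 2 for the other goods. Agent 0
moves first and takes `g`. From then on agent 1, holding fewer than two goods, envies agent 0,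
while agent 0 never envies a single good other than `g`; so agent 1 is the envious source and
takes both remaining goods.

Agent 0 reports 2 for the good `x` that agent 1 values least and 1 for the other goods, and takes
`x` first. If agent 1 envies her and takes a good, she values it at least as much as `x`, so
nobody envies anybody and agent 0 takes the last good. Otherwise agent 0 takes a second good at
once.
-/

open Function

def Bid.peak {m : ℕ} (x : Fin m) (k : ℕ) : Bid m where
  val g := if g = x then k + 1 else k
  nonneg g := by split_ifs <;> positivity
  pref := 1

@[simp]
lemma Bid.peak_val_self {m : ℕ} (x : Fin m) (k : ℕ) : (Bid.peak x k).val x = k + 1 :=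
  if_pos rfl

lemma Bid.peak_val_of_ne {m : ℕ} {x g : Fin m} (k : ℕ) (hg : g ≠ x) :
    (Bid.peak x k).val g = k :=
  if_neg hg

namespace ECE

variable {n m : ℕ}

lemma bval_nonneg (b : Bid m) (S : Finset (Fin m)) : 0 ≤ bval b S :=
  sum_nonneg fun g _ => b.nonneg g

lemma bval_singleton (b : Bid m) (g : Fin m) : bval b {g} = b.val g := sum_singleton _ _

lemma bval_peak (x : Fin m) (k : ℕ) (S : Finset (Fin m)) :
    bval (Bid.peak x k) S = k * #S + if x ∈ S then 1 else 0 := by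
  have hsplit : ∀ g, (if g = x then (k : ℝ) + 1 else k) = k + if g = x then 1 else 0 := by
    intro g; split_ifs <;> simp
  simp [bval, Bid.peak, hsplit, sum_add_distrib, mul_comm]

@[simp]
lemma value_one (S : Finset (Fin m)) : value (fun _ => (1 : ℝ)) S = #S := by
  simp [value]

lemma not_envies_self (b : Fin n → Bid m) (P : Fin n → Finset (Fin m)) (i : Fin n) :
    ¬ envies b P i i :=
  lt_irrefl _

lemma not_envies_of_eq_empty {b : Fin n → Bid m} {P : Fin n → Finset (Fin m)} {i j : Fin n}
    (h : P j = ∅) : ¬ envies b P i j := by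
  simpa [envies, h, bval] using bval_nonneg (b i) (P i)

lemma mem_sources {b : Fin n → Bid m} {P : Fin n → Finset (Fin m)} {i : Fin n} :
    i ∈ sources b P ↔ ∀ j, ¬ envies b P j i := by
  simp [sources]

lemma stateECE_succ_of_pick {b : Fin n → Bid m} {pa pi} {k : ℕ} {P R} {i : Fin n}
    (hs : stateECE b pa pi k = (P, R)) (hR : R.Nonempty) (hpa : pa P = some i) :
    stateECE b pa pi (k + 1) =
      (resolve b (n * n + 1) (update P i (insert (pi i R hR) (P i))), R.erase (pi i R hR)) := by
  have hupd : (fun j => if j = i then insert (pi i R hR) (P j) else P j) =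
      update P i (insert (pi i R hR) (P i)) := by
    funext j
    by_cases hj : j = i <;> simp [hj]
  rw [stateECE, hs]
  simp only [hpa, dif_pos hR, hupd]

lemma resolve_of_sources_nonempty {b : Fin n → Bid m} {P : Fin n → Finset (Fin m)} (k : ℕ)
    (h : (sources b P).Nonempty) : resolve b (k + 1) P = P := by
  rw [resolve, if_pos h]

def IsPartialAllocation (P : Fin n → Finset (Fin m)) (R : Finset (Fin m)) : Prop :=
  Pairwise (Disjoint on P) ∧ ∀ i, Disjoint (P i) R

namespace IsPartialAllocation

variable {P : Fin n → Finset (Fin m)} {R : Finset (Fin m)}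

lemma elimOnce (b : Fin n → Bid m) (h : IsPartialAllocation P R) :
    IsPartialAllocation (elimOnce b P) R := by
  rw [ECE.elimOnce]
  split_ifs
  · exact ⟨fun i j hij => h.1 fun he => hij (Equiv.injective _ he), fun i => h.2 _⟩
  · exact h

lemma resolve (b : Fin n → Bid m) :
    ∀ (fuel : ℕ) {P : Fin n → Finset (Fin m)}, IsPartialAllocation P R →
      IsPartialAllocation (ECE.resolve b fuel P) R
  | 0, _, h => h
  | fuel + 1, _, h => by
    rw [ECE.resolve]
    split_ifs
    · exact h
    · exact resolve b fuel (h.elimOnce b)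

lemma update_insert (h : IsPartialAllocation P R) (i : Fin n) {g : Fin m} (hg : g ∈ R) :
    IsPartialAllocation (update P i (insert g (P i))) (R.erase g) := by
  have hgP : ∀ j, g ∉ P j := fun j hj => disjoint_left.1 (h.2 j) hj hg
  refine ⟨fun j k hjk => ?_, fun j => ?_⟩
  · have hPjk : Disjoint (P j) (P k) := h.1 hjk
    rcases eq_or_ne j i with rfl | hj
    · simpa [onFun, update_of_ne hjk.symm, hgP k] using hPjk
    rcases eq_or_ne k i with rfl | hk
    · simpa [onFun, update_of_ne hj, hgP j] using hPjk
    · simpa [onFun, update_of_ne hj, update_of_ne hk] using hPjk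
  · have := (h.2 j).mono_right (erase_subset g R)
    rcases eq_or_ne j i with rfl | hj
    · simpa using this
    · simpa [update_of_ne hj] using this

end IsPartialAllocation

lemma isPartialAllocation_stateECE (b : Fin n → Bid m) (pa pi)
    (hpi : ∀ (i : Fin n) (R : Finset (Fin m)) (hR : R.Nonempty), pi i R hR ∈ R) (k : ℕ) :
    IsPartialAllocation (stateECE b pa pi k).1 (stateECE b pa pi k).2 := by
  induction k with
  | zero => exact ⟨fun i j _ => disjoint_empty_left _, fun i => disjoint_empty_left _⟩
  | succ k ih =>
    rcases hs : stateECE b pa pi k with ⟨P, R⟩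
    rw [hs] at ih
    by_cases hR : R.Nonempty
    · rcases hpa : pa P with _ | i
      · simpa [stateECE, hs, hpa, hR] using ih
      · rw [stateECE_succ_of_pick hs hR hpa]
        exact (ih.update_insert i (hpi i R hR)).resolve b _
    · simpa [stateECE, hs, hR] using ih

lemma bestItem_mem (v : Fin m → ℝ) (R : Finset (Fin m)) (hR : R.Nonempty) :
    bestItem v R hR ∈ R :=
  (mem_filter.1 (min'_mem _ _)).1

lemma le_bestItem (v : Fin m → ℝ) (R : Finset (Fin m)) (hR : R.Nonempty) :
    ∀ g ∈ R, v g ≤ v (bestItem v R hR) :=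
  (mem_filter.1 (min'_mem (R.filter fun g => ∀ g' ∈ R, v g' ≤ v g) _)).2

lemma bestItem_peak {x : Fin m} {R : Finset (Fin m)} (hx : x ∈ R) (k : ℕ) (hR : R.Nonempty) :
    bestItem (Bid.peak x k).val R hR = x := by
  by_contra hne
  have hle := le_bestItem (Bid.peak x k).val R hR x hx
  rw [Bid.peak_val_self, Bid.peak_val_of_ne k hne] at hle
  linarith

noncomputable abbrev bestItemState (b : Fin n → Bid m) :
    ℕ → (Fin n → Finset (Fin m)) × Finset (Fin m) :=
  stateECE b (priAgent b) fun i R hR => bestItem (b i).val R hR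

lemma bestItemECE_eq_bestItemState (b : Fin n → Bid m) :
    BestItemECE b = (bestItemState b m).1 :=
  rfl

lemma disjoint_bestItemECE (b : Fin n → Bid m) {i j : Fin n} (hij : i ≠ j) :
    Disjoint (BestItemECE b i) (BestItemECE b j) :=
  (isPartialAllocation_stateECE b _ _ (fun _ _ _ => bestItem_mem _ _ _) m).1 hij

section TwoAgents

variable {b : Fin 2 → Bid m} {P : Fin 2 → Finset (Fin m)}

@[simp]
lemma envies_zero_one {A B : Finset (Fin m)} :
    envies b ![A, B] 0 1 ↔ bval (b 0) A < bval (b 0) B :=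
  Iff.rfl

@[simp]
lemma envies_one_zero {A B : Finset (Fin m)} :
    envies b ![A, B] 1 0 ↔ bval (b 1) B < bval (b 1) A :=
  Iff.rfl

lemma zero_mem_sources (h : ¬ envies b P 1 0) : 0 ∈ sources b P :=
  mem_sources.2 <| Fin.forall_fin_two.2 ⟨not_envies_self b P 0, h⟩

lemma one_mem_sources (h : ¬ envies b P 0 1) : 1 ∈ sources b P :=
  mem_sources.2 <| Fin.forall_fin_two.2 ⟨h, not_envies_self b P 1⟩

lemma priAgent_eq_zero (h : ¬ envies b P 1 0) : priAgent b P = some 0 := by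
  have h1 : ¬ ∃ j, envies b P 1 j := by
    rintro ⟨j, hj⟩
    fin_cases j
    exacts [h hj, not_envies_self b P 1 hj]
  rw [priAgent]
  split_ifs with henv hsrc
  · obtain ⟨i, hi⟩ :
        ∃ i, ((sources b P).filter fun i => ∃ j, envies b P i j).min' henv = i := ⟨_, rfl⟩
    have hmem := (mem_filter.1 (hi ▸ min'_mem _ henv)).2
    rw [hi]
    fin_cases i
    exacts [rfl, absurd hmem h1]
  · exact congrArg some (le_antisymm (min'_le _ _ (zero_mem_sources h)) (Fin.zero_le _))
  · exact absurd ⟨0, zero_mem_sources h⟩ hsrc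

lemma priAgent_eq_one (h10 : envies b P 1 0) (h01 : ¬ envies b P 0 1) :
    priAgent b P = some 1 := by
  have h1 : 1 ∈ (sources b P).filter fun i => ∃ j, envies b P i j :=
    mem_filter.2 ⟨one_mem_sources h01, 0, h10⟩
  rw [priAgent, dif_pos ⟨1, h1⟩]
  obtain ⟨i, hi⟩ :
      ∃ i, ((sources b P).filter fun i => ∃ j, envies b P i j).min' ⟨1, h1⟩ = i := ⟨_, rfl⟩
  have hmem := (mem_filter.1 (hi ▸ min'_mem _ ⟨1, h1⟩)).1
  rw [hi]
  fin_cases i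
  exacts [absurd h10 (mem_sources.1 hmem 1), rfl]

lemma bestItemState_zero : bestItemState b 0 = (![∅, ∅], univ) :=
  Prod.ext (funext fun i => by fin_cases i <;> rfl) rfl

lemma exists_bestItemState_succ_of_not_envies_one_zero {k : ℕ} {A B R : Finset (Fin m)}
    (hs : bestItemState b k = (![A, B], R)) (hR : R.Nonempty) (h10 : ¬ envies b ![A, B] 1 0)
    (hsrc : ∀ g ∈ R, (sources b ![insert g A, B]).Nonempty) :
    ∃ g ∈ R, bestItem (b 0).val R hR = g ∧
      bestItemState b (k + 1) = (![insert g A, B], R.erase g) := by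
  refine ⟨_, bestItem_mem _ R hR, rfl, ?_⟩
  have hupd : ∀ S, update ![A, B] 0 S = ![S, B] := fun S => by
    funext i; fin_cases i <;> rfl
  refine (stateECE_succ_of_pick hs hR (priAgent_eq_zero h10)).trans ?_
  rw [Matrix.cons_val_zero, hupd, resolve_of_sources_nonempty _ (hsrc _ (bestItem_mem _ R hR))]

lemma exists_bestItemState_succ_of_envies_one_zero {k : ℕ} {A B R : Finset (Fin m)}
    (hs : bestItemState b k = (![A, B], R)) (hR : R.Nonempty) (h10 : envies b ![A, B] 1 0)
    (h01 : ¬ envies b ![A, B] 0 1) (hsrc : ∀ g ∈ R, (sources b ![A, insert g B]).Nonempty) :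
    ∃ g ∈ R, bestItem (b 1).val R hR = g ∧
      bestItemState b (k + 1) = (![A, insert g B], R.erase g) := by
  refine ⟨_, bestItem_mem _ R hR, rfl, ?_⟩
  have hupd : ∀ S, update ![A, B] 1 S = ![A, S] := fun S => by
    funext i; fin_cases i <;> rfl
  refine (stateECE_succ_of_pick hs hR (priAgent_eq_one h10 h01)).trans ?_
  rw [Matrix.cons_val_one, Matrix.cons_val_zero, hupd,
    resolve_of_sources_nonempty _ (hsrc _ (bestItem_mem _ R hR))]

end TwoAgents

lemma erase_nonempty_fin_three (x : Fin 3) : (univ.erase x).Nonempty := by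
  revert x; decide

lemma erase_erase_nonempty_fin_three (x y : Fin 3) : ((univ.erase x).erase y).Nonempty := by
  revert x y; decide

lemma exists_bid_two_le_card_bestItemECE_one (b : Fin 2 → Bid 3) :
    ∃ b' : Bid 3, 2 ≤ #(BestItemECE (update b 1 b') 1) := by
  obtain ⟨g, hg⟩ : ∃ g, bestItem (b 0).val univ univ_nonempty = g := ⟨_, rfl⟩
  refine ⟨Bid.peak g 2, ?_⟩
  set c := update b 1 (Bid.peak g 2)
  have hc0 : c 0 = b 0 := update_of_ne (by decide) _ _
  have hc1 : c 1 = Bid.peak g 2 := update_self _ _ _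
  have hg_best : ∀ u, ¬ bval (c 0) {g} < bval (c 0) {u} := fun u => by
    simpa [hc0, bval_singleton] using hg ▸ le_bestItem _ _ _ u (mem_univ u)
  obtain ⟨g', -, hg', h1⟩ := exists_bestItemState_succ_of_not_envies_one_zero
    (bestItemState_zero (b := c)) univ_nonempty (not_envies_of_eq_empty (by simp))
    fun _ _ => ⟨1, one_mem_sources (not_envies_of_eq_empty (by simp))⟩
  rw [hc0, hg] at hg'
  subst hg'
  obtain ⟨u, hu, -, h2⟩ := exists_bestItemState_succ_of_envies_one_zero h1
    (erase_nonempty_fin_three g) (by norm_num [hc1, bval_peak])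
    (not_envies_of_eq_empty (by simp)) fun u _ => ⟨1, one_mem_sources (by simpa using hg_best u)⟩
  have hug := ne_of_mem_erase hu
  obtain ⟨w, hw, -, h3⟩ := exists_bestItemState_succ_of_envies_one_zero h2
    (erase_erase_nonempty_fin_three g u) (by norm_num [hc1, bval_peak, hug.symm])
    (by simpa using hg_best u) fun w hw => ⟨0, zero_mem_sources <| by
      norm_num [hc1, bval_peak, ne_of_mem_erase hw, (ne_of_mem_erase (mem_of_mem_erase hw)).symm,
        hug.symm]⟩
  rw [bestItemECE_eq_bestItemState, h3]
  simp [ne_of_mem_erase hw]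

lemma exists_bid_two_le_card_bestItemECE_zero (b : Fin 2 → Bid 3) :
    ∃ b' : Bid 3, 2 ≤ #(BestItemECE (update b 0 b') 0) := by
  obtain ⟨x, -, hx_min⟩ := exists_min_image univ (b 1).val univ_nonempty
  refine ⟨Bid.peak x 1, ?_⟩
  set c := update b 0 (Bid.peak x 1)
  have hc0 : c 0 = Bid.peak x 1 := update_self _ _ _
  have hc1 : c 1 = b 1 := update_of_ne (by decide) _ _
  have hx_least : ∀ y, ¬ bval (c 1) {y} < bval (c 1) {x} := fun y => by
    simpa [hc1, bval_singleton] using hx_min y (mem_univ y)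
  obtain ⟨x', -, hx', h1⟩ := exists_bestItemState_succ_of_not_envies_one_zero
    (bestItemState_zero (b := c)) univ_nonempty (not_envies_of_eq_empty (by simp))
    fun _ _ => ⟨1, one_mem_sources (not_envies_of_eq_empty (by simp))⟩
  rw [hc0, bestItem_peak (mem_univ x)] at hx'
  subst hx'
  rw [bestItemECE_eq_bestItemState]
  by_cases h10 : envies c ![insert x ∅, ∅] 1 0
  · obtain ⟨y, hy, -, h2⟩ := exists_bestItemState_succ_of_envies_one_zero h1
      (erase_nonempty_fin_three x) h10 (not_envies_of_eq_empty (by simp))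
      fun y _ => ⟨0, zero_mem_sources (by simpa using hx_least y)⟩
    have hyx := ne_of_mem_erase hy
    obtain ⟨z, hz, -, h3⟩ := exists_bestItemState_succ_of_not_envies_one_zero h2
      (erase_erase_nonempty_fin_three x y) (by simpa using hx_least y)
      fun z hz => ⟨1, one_mem_sources <| by
        norm_num [hc0, bval_peak, ne_of_mem_erase (mem_of_mem_erase hz), hyx.symm]⟩
    rw [h3]
    simp [ne_of_mem_erase (mem_of_mem_erase hz)]
  · obtain ⟨w, hw, -, h2⟩ := exists_bestItemState_succ_of_not_envies_one_zero h1
      (erase_nonempty_fin_three x) h10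
      fun _ _ => ⟨1, one_mem_sources (not_envies_of_eq_empty (by simp))⟩
    have hwx := ne_of_mem_erase hw
    by_cases h10' : envies c ![insert w (insert x ∅), ∅] 1 0
    · obtain ⟨u, hu, -, h3⟩ := exists_bestItemState_succ_of_envies_one_zero h2
        (erase_erase_nonempty_fin_three x w) h10' (not_envies_of_eq_empty (by simp))
        fun u hu => ⟨1, one_mem_sources <| by
          norm_num [hc0, bval_peak, hwx, (ne_of_mem_erase (mem_of_mem_erase hu)).symm]⟩
      rw [h3]
      simp [hwx]
    · obtain ⟨u, -, -, h3⟩ := exists_bestItemState_succ_of_not_envies_one_zero h2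
        (erase_erase_nonempty_fin_three x w) h10'
        fun _ _ => ⟨1, one_mem_sources (not_envies_of_eq_empty (by simp))⟩
      rw [h3]
      exact (card_le_card (subset_insert _ _)).trans' (by simp [hwx])

end ECE

open ECE

/-- For the instance with exactly 2 agents whose true valuations are
unary additive and exactly 3 goods, Best-Item-E-C-E has no pure Nash equilibrium: for
every bid profile there is an agent and an alternative bid that strictly improves her
true value. -/
theorem bestItem_two_unary_three_goods_no_PNE (b : Fin 2 → Bid 3) :
    ∃ (i : Fin 2) (b' : Bid 3),
      value (fun _ => (1 : ℝ)) (BestItemECE b i) <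
        value (fun _ => (1 : ℝ)) (BestItemECE (Function.update b i b') i) := by
  have hcard : #(BestItemECE b 0) + #(BestItemECE b 1) ≤ 3 := by
    rw [← card_union_of_disjoint (disjoint_bestItemECE b zero_ne_one)]
    exact card_le_univ _
  simp only [value_one, Nat.cast_lt]
  by_cases h0 : #(BestItemECE b 0) ≤ 1
  · obtain ⟨b', hb'⟩ := exists_bid_two_le_card_bestItemECE_zero b
    exact ⟨0, b', by omega⟩
  · obtain ⟨b', hb'⟩ := exists_bid_two_le_card_bestItemECE_one b
    exact ⟨1, b', by omega⟩
end

section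
/- For the instance with exactly 2 agents and 4 goods in which both agents have the identical binary additive true valuation v with v(g_1) = 0 and v(g_2) = v(g_3) = v(g_4) = 1, Priority-E-C-E has no pure Nash equilibrium. -/
/-!
Formalization of the strategic Envy-Cycle-Elimination (E-C-E) setting.

There are `n` agents and `m` goods (`Fin m`), with the predefined ordering of agents
and goods given by the orders on `Fin n` and `Fin m`.  A bid consists of a reported
additive valuation (a nonnegative value for every good) together with a preference
list (a permutation of the goods).  E-C-E starts from empty bundles and, while
unallocated goods remain, selects a source of the envy graph (according to the rule of
the respective variant), adds one unallocated good to that agent's bundle (again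
according to the rule of the respective variant), and then repeatedly eliminates envy
cycles, in a fixed order, until the envy graph has a source.
-/

open scoped Classical
open Finset

open ECE
namespace ECE2
open ECE Finset



abbrev vv : Fin 4 → ℝ := fun g => if g = 0 then (0:ℝ) else 1

def alloc (S T : Finset (Fin 4)) : Fin 2 → Finset (Fin 4) := fun i => if i = 0 then S else T

@[simp] lemma alloc_zero (S T : Finset (Fin 4)) : alloc S T 0 = S := rfl
@[simp] lemma alloc_one (S T : Finset (Fin 4)) : alloc S T 1 = T := rfl

@[simp] lemma bval_empty (c : Bid 4) : bval c ∅ = 0 := by simp [bval]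
@[simp] lemma bval_single (c : Bid 4) (x : Fin 4) : bval c {x} = c.val x := by simp [bval]
lemma bval_nonneg (c : Bid 4) (S : Finset (Fin 4)) : 0 ≤ bval c S :=
  Finset.sum_nonneg fun g _ => c.nonneg g
lemma bval_pair (c : Bid 4) {x y : Fin 4} (h : x ≠ y) :
    bval c {x, y} = c.val x + c.val y := by
  rw [bval, Finset.sum_insert (by simpa using h), Finset.sum_singleton]
lemma bval_triple (c : Bid 4) {x y z : Fin 4} (h1 : x ≠ y) (h2 : x ≠ z) (h3 : y ≠ z) :
    bval c {x, y, z} = c.val x + c.val y + c.val z := by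
  rw [bval, Finset.sum_insert (by simp [h1, h2]), Finset.sum_insert (by simpa using h3),
    Finset.sum_singleton]; ring
lemma bval_quad (c : Bid 4) {x y z w : Fin 4} (h1 : x ≠ y) (h2 : x ≠ z) (h3 : x ≠ w)
    (h4 : y ≠ z) (h5 : y ≠ w) (h6 : z ≠ w) :
    bval c {x, y, z, w} = c.val x + c.val y + c.val z + c.val w := by
  rw [bval, Finset.sum_insert (by simp [h1, h2, h3]), Finset.sum_insert (by simp [h4, h5]),
    Finset.sum_insert (by simpa using h6), Finset.sum_singleton]; ring

lemma not_envies_self (b : Fin 2 → Bid 4) (P : Fin 2 → Finset (Fin 4)) (i : Fin 2) :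
    ¬ envies b P i i := lt_irrefl _

lemma mem_sources (b : Fin 2 → Bid 4) (P : Fin 2 → Finset (Fin 4)) (i : Fin 2) :
    i ∈ sources b P ↔ (¬ envies b P 0 i ∧ ¬ envies b P 1 i) := by
  simp [sources, Fin.forall_fin_two]

lemma sources_ne_left {b : Fin 2 → Bid 4} {P : Fin 2 → Finset (Fin 4)}
    (h10 : ¬ envies b P 1 0) : (sources b P).Nonempty :=
  ⟨0, (mem_sources b P 0).2 ⟨not_envies_self b P 0, h10⟩⟩

lemma sources_ne_right {b : Fin 2 → Bid 4} {P : Fin 2 → Finset (Fin 4)}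
    (h01 : ¬ envies b P 0 1) : (sources b P).Nonempty :=
  ⟨1, (mem_sources b P 1).2 ⟨h01, not_envies_self b P 1⟩⟩

lemma resolve_stop {b : Fin 2 → Bid 4} {P : Fin 2 → Finset (Fin 4)}
    (h : ¬ envies b P 0 1 ∨ ¬ envies b P 1 0) (k : ℕ) : resolve b (k+1) P = P := by
  have hne : (sources b P).Nonempty := h.elim sources_ne_right sources_ne_left
  simp [resolve, hne]

lemma perm_fin_two (σ : Equiv.Perm (Fin 2)) : σ = 1 ∨ σ = Equiv.swap 0 1 := by
  revert σ; decide





lemma cycleSet_eq {b : Fin 2 → Bid 4} {P : Fin 2 → Finset (Fin 4)}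
    (h01 : envies b P 0 1) (h10 : envies b P 1 0) :
    cycleSet b P = {Equiv.swap 0 1} := by
  ext σ
  simp only [cycleSet, Finset.mem_filter, Finset.mem_univ, true_and, Finset.mem_singleton]
  constructor
  · rintro ⟨hc, -⟩
    rcases perm_fin_two σ with rfl | rfl
    · exact absurd hc (by rintro ⟨x, hx, -⟩; exact hx rfl)
    · rfl
  · rintro rfl
    refine ⟨Equiv.Perm.isCycle_swap (by decide), ?_⟩
    intro i
    fin_cases i
    · intro _; simpa using h01
    · intro _; simpa using h10

lemma elimOnce_swap {b : Fin 2 → Bid 4} {P : Fin 2 → Finset (Fin 4)}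
    (h01 : envies b P 0 1) (h10 : envies b P 1 0) :
    elimOnce b P = fun i => P (Equiv.swap 0 1 i) := by
  have hc := cycleSet_eq h01 h10
  have hne : (cycleSet b P).Nonempty := by
    rw [hc]; exact ⟨_, Finset.mem_singleton_self _⟩
  rw [elimOnce, dif_pos hne]
  simp only [hc, Finset.image_singleton, Finset.min'_singleton, Equiv.symm_apply_apply]

lemma sources_empty {b : Fin 2 → Bid 4} {P : Fin 2 → Finset (Fin 4)}
    (h01 : envies b P 0 1) (h10 : envies b P 1 0) : ¬ (sources b P).Nonempty := by
  rintro ⟨i, hi⟩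
  rw [mem_sources] at hi
  fin_cases i
  · exact hi.2 h10
  · exact hi.1 h01

lemma resolve_swap {b : Fin 2 → Bid 4} {P : Fin 2 → Finset (Fin 4)}
    (h01 : envies b P 0 1) (h10 : envies b P 1 0) (k : ℕ) :
    resolve b (k+2) P = fun i => P (Equiv.swap 0 1 i) := by
  have he := sources_empty h01 h10
  show resolve b (k+1+1) P = _
  rw [resolve, if_neg he, elimOnce_swap h01 h10]
  apply resolve_stop
  left
  show ¬ bval (b 0) (P (Equiv.swap 0 1 0)) < bval (b 0) (P (Equiv.swap 0 1 1))
  rw [Equiv.swap_apply_left, Equiv.swap_apply_right]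
  exact lt_asymm h01

lemma swap_alloc (b : Fin 2 → Bid 4) (S T : Finset (Fin 4)) :
    (fun i => alloc S T (Equiv.swap 0 1 i)) = alloc T S := by
  funext i
  fin_cases i
  · simp
  · simp


lemma sources_eq_nn {b : Fin 2 → Bid 4} {P : Fin 2 → Finset (Fin 4)}
    (h01 : ¬ envies b P 0 1) (h10 : ¬ envies b P 1 0) : sources b P = Finset.univ := by
  ext i
  simp only [Finset.mem_univ, iff_true, mem_sources]
  fin_cases i
  · exact ⟨not_envies_self b P 0, h10⟩
  · exact ⟨h01, not_envies_self b P 1⟩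

lemma sources_eq_01 {b : Fin 2 → Bid 4} {P : Fin 2 → Finset (Fin 4)}
    (h01 : envies b P 0 1) (h10 : ¬ envies b P 1 0) : sources b P = {0} := by
  ext i
  rw [mem_sources, Finset.mem_singleton]
  fin_cases i
  · simpa using ⟨not_envies_self b P 0, h10⟩
  · show (¬envies b P 0 1 ∧ ¬envies b P 1 1) ↔ (1 : Fin 2) = 0
    constructor
    · intro h; exact absurd h01 h.1
    · intro h; exact absurd h (by decide)
  
lemma sources_eq_10 {b : Fin 2 → Bid 4} {P : Fin 2 → Finset (Fin 4)}
    (h01 : ¬ envies b P 0 1) (h10 : envies b P 1 0) : sources b P = {1} := by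
  ext i
  rw [mem_sources, Finset.mem_singleton]
  fin_cases i
  · show (¬envies b P 0 0 ∧ ¬envies b P 1 0) ↔ (0 : Fin 2) = 1
    constructor
    · intro h; exact absurd h10 h.2
    · intro h; exact absurd h (by decide)
  · simpa using ⟨h01, not_envies_self b P 1⟩

lemma envious_iff (b : Fin 2 → Bid 4) (P : Fin 2 → Finset (Fin 4)) (i : Fin 2) :
    (∃ j, envies b P i j) ↔ envies b P i 0 ∨ envies b P i 1 := by
  constructor
  · rintro ⟨j, hj⟩
    fin_cases j
    · exact Or.inl hj
    · exact Or.inr hj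
  · rintro (h | h) <;> exact ⟨_, h⟩

lemma priAgent_nn {b : Fin 2 → Bid 4} {P : Fin 2 → Finset (Fin 4)}
    (h01 : ¬ envies b P 0 1) (h10 : ¬ envies b P 1 0) : priAgent b P = some 0 := by
  have hs := sources_eq_nn h01 h10
  have hf : ((sources b P).filter fun i => ∃ j, envies b P i j) = ∅ := by
    rw [Finset.filter_eq_empty_iff]
    intro i _
    rw [envious_iff]
    rintro (h | h)
    · fin_cases i
      · exact not_envies_self b P 0 h
      · exact h10 h
    · fin_cases i
      · exact h01 h
      · exact not_envies_self b P 1 h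
  rw [priAgent, dif_neg (by rw [hf]; simp), dif_pos (by rw [hs]; exact Finset.univ_nonempty)]
  congr 1
  apply le_antisymm
  · exact Finset.min'_le _ _ (by rw [hs]; exact Finset.mem_univ 0)
  · exact Fin.zero_le _

lemma priAgent_01 {b : Fin 2 → Bid 4} {P : Fin 2 → Finset (Fin 4)}
    (h01 : envies b P 0 1) (h10 : ¬ envies b P 1 0) : priAgent b P = some 0 := by
  have hs := sources_eq_01 h01 h10
  have hf : ((sources b P).filter fun i => ∃ j, envies b P i j) = {0} := by
    rw [hs]
    ext i
    simp only [Finset.mem_filter, Finset.mem_singleton]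
    constructor
    · rintro ⟨h, -⟩; exact h
    · rintro rfl; exact ⟨rfl, ⟨1, h01⟩⟩
  rw [priAgent, dif_pos (by rw [hf]; exact ⟨0, Finset.mem_singleton_self 0⟩)]
  congr 1
  simp only [hf, Finset.min'_singleton]

lemma priAgent_10 {b : Fin 2 → Bid 4} {P : Fin 2 → Finset (Fin 4)}
    (h01 : ¬ envies b P 0 1) (h10 : envies b P 1 0) : priAgent b P = some 1 := by
  have hs := sources_eq_10 h01 h10
  have hf : ((sources b P).filter fun i => ∃ j, envies b P i j) = {1} := by
    rw [hs]
    ext i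
    simp only [Finset.mem_filter, Finset.mem_singleton]
    constructor
    · rintro ⟨h, -⟩; exact h
    · rintro rfl; exact ⟨rfl, ⟨0, h10⟩⟩
  rw [priAgent, dif_pos (by rw [hf]; exact ⟨1, Finset.mem_singleton_self 1⟩)]
  congr 1
  simp only [hf, Finset.min'_singleton]
noncomputable abbrev pstate (b : Fin 2 → Bid 4) (k : ℕ) :=
  stateECE b (priAgent b) (fun _ R hR => R.min' hR) k

lemma Priority_eq (b : Fin 2 → Bid 4) : Priority b = (pstate b 4).1 := rfl

lemma pstate_zero (b : Fin 2 → Bid 4) : pstate b 0 = (alloc ∅ ∅, Finset.univ) := by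
  rw [pstate, stateECE]
  exact Prod.ext (by funext i; fin_cases i <;> simp [alloc]) rfl

lemma insert_alloc0 (g : Fin 4) (S T : Finset (Fin 4)) :
    (fun j => if j = (0:Fin 2) then insert g (alloc S T j) else alloc S T j)
      = alloc (insert g S) T := by
  funext j; fin_cases j <;> simp [alloc]

lemma insert_alloc1 (g : Fin 4) (S T : Finset (Fin 4)) :
    (fun j => if j = (1:Fin 2) then insert g (alloc S T j) else alloc S T j)
      = alloc S (insert g T) := by
  funext j; fin_cases j <;> simp [alloc]

lemma pstate_succ0 {b : Fin 2 → Bid 4} {k : ℕ} {S T R} (hs : pstate b k = (alloc S T, R))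
    (hR : R.Nonempty) (g : Fin 4) (hg : R.min' hR = g)
    (hpa : priAgent b (alloc S T) = some 0) :
    pstate b (k+1) = (resolve b 5 (alloc (insert g S) T), R.erase g) := by
  rw [pstate] at hs
  rw [pstate, stateECE, hs]
  rw [dif_pos hR, hpa]
  subst hg
  show (ECE.resolve b (2*2+1)
      (fun j => if j = (0:Fin 2) then insert (R.min' hR) (alloc S T j) else alloc S T j),
      R.erase (R.min' hR)) = _
  rw [insert_alloc0]

lemma pstate_succ1 {b : Fin 2 → Bid 4} {k : ℕ} {S T R} (hs : pstate b k = (alloc S T, R))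
    (hR : R.Nonempty) (g : Fin 4) (hg : R.min' hR = g)
    (hpa : priAgent b (alloc S T) = some 1) :
    pstate b (k+1) = (resolve b 5 (alloc S (insert g T)), R.erase g) := by
  rw [pstate] at hs
  rw [pstate, stateECE, hs]
  rw [dif_pos hR, hpa]
  subst hg
  show (ECE.resolve b (2*2+1)
      (fun j => if j = (1:Fin 2) then insert (R.min' hR) (alloc S T j) else alloc S T j),
      R.erase (R.min' hR)) = _
  rw [insert_alloc1]
lemma resolve5_stop {b : Fin 2 → Bid 4} {S T : Finset (Fin 4)}
    (h : ¬ envies b (alloc S T) 0 1 ∨ ¬ envies b (alloc S T) 1 0) :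
    resolve b 5 (alloc S T) = alloc S T := resolve_stop h 4

lemma resolve5_swap {b : Fin 2 → Bid 4} {S T : Finset (Fin 4)}
    (h01 : envies b (alloc S T) 0 1) (h10 : envies b (alloc S T) 1 0) :
    resolve b 5 (alloc S T) = alloc T S := by
  rw [show (5:ℕ) = 3 + 2 from rfl, resolve_swap h01 h10 3, swap_alloc b]

lemma envies01_iff (b : Fin 2 → Bid 4) (S T : Finset (Fin 4)) :
    envies b (alloc S T) 0 1 ↔ bval (b 0) S < bval (b 0) T := Iff.rfl

lemma envies10_iff (b : Fin 2 → Bid 4) (S T : Finset (Fin 4)) :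
    envies b (alloc S T) 1 0 ↔ bval (b 1) T < bval (b 1) S := Iff.rfl

-- concrete Finset facts
lemma huniv : (Finset.univ : Finset (Fin 4)).Nonempty := Finset.univ_nonempty
lemma he0 : (Finset.univ : Finset (Fin 4)).erase 0 = {1,2,3} := by decide
lemma he1 : ({1,2,3} : Finset (Fin 4)).erase 1 = {2,3} := by decide
lemma he2 : ({2,3} : Finset (Fin 4)).erase 2 = {3} := by decide
lemma he3 : ({3} : Finset (Fin 4)).erase 3 = ∅ := by decide
lemma hne123 : ({1,2,3} : Finset (Fin 4)).Nonempty := ⟨1, by decide⟩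
lemma hne23 : ({2,3} : Finset (Fin 4)).Nonempty := ⟨2, by decide⟩
lemma hne3 : ({3} : Finset (Fin 4)).Nonempty := ⟨3, by decide⟩
lemma hmin_univ : (Finset.univ : Finset (Fin 4)).min' huniv = 0 :=
  le_antisymm (Finset.min'_le _ _ (Finset.mem_univ 0)) (Fin.zero_le _)
lemma hmin123 : ({1,2,3} : Finset (Fin 4)).min' hne123 = 1 :=
  le_antisymm (Finset.min'_le _ _ (by decide)) (Finset.le_min' _ _ _ (by decide))
lemma hmin23 : ({2,3} : Finset (Fin 4)).min' hne23 = 2 :=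
  le_antisymm (Finset.min'_le _ _ (by decide)) (Finset.le_min' _ _ _ (by decide))
lemma hmin3 : ({3} : Finset (Fin 4)).min' hne3 = 3 := Finset.min'_singleton 3

-- values
lemma vv0 : vv 0 = 0 := if_pos rfl
lemma vv1 : vv 1 = 1 := if_neg (by decide)
lemma vv2 : vv 2 = 1 := if_neg (by decide)
lemma vv3 : vv 3 = 1 := if_neg (by decide)

lemma value_insert (v : Fin 4 → ℝ) {x : Fin 4} {S : Finset (Fin 4)} (h : x ∉ S) :
    value v (insert x S) = v x + value v S := by rw [value, value, Finset.sum_insert h]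

lemma value_singleton (v : Fin 4 → ℝ) (x : Fin 4) : value v {x} = v x := by
  rw [value, Finset.sum_singleton]

lemma val_23 : value vv {2,3} = 2 := by
  rw [value_insert vv (by decide), value_singleton, vv2, vv3]; norm_num
lemma val_013 : value vv {0,1,3} = 2 := by
  rw [value_insert vv (by decide), value_insert vv (by decide), value_singleton,
    vv0, vv1, vv3]; norm_num
lemma val_012 : value vv {0,1,2} = 2 := by
  rw [value_insert vv (by decide), value_insert vv (by decide), value_singleton,
    vv0, vv1, vv2]; norm_num
lemma val_0123 : value vv {0,1,2,3} = 3 := by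
  rw [value_insert vv (by decide), value_insert vv (by decide), value_insert vv (by decide),
    value_singleton, vv0, vv1, vv2, vv3]; norm_num
lemma val_12 : value vv {1,2} = 2 := by
  rw [value_insert vv (by decide), value_singleton, vv1, vv2]; norm_num
lemma val_123 : value vv {1,2,3} = 3 := by
  rw [value_insert vv (by decide), value_insert vv (by decide), value_singleton,
    vv1, vv2, vv3]; norm_num
lemma val_023 : value vv {0,2,3} = 2 := by
  rw [value_insert vv (by decide), value_insert vv (by decide), value_singleton,
    vv0, vv2, vv3]; norm_num
lemma val_13 : value vv {1,3} = 2 := by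
  rw [value_insert vv (by decide), value_singleton, vv1, vv3]; norm_num
lemma elimOnce_perm (b : Fin 2 → Bid 4) (P : Fin 2 → Finset (Fin 4)) :
    ∃ σ : Equiv.Perm (Fin 2), elimOnce b P = fun i => P (σ i) := by
  rw [elimOnce]
  split
  · exact ⟨_, rfl⟩
  · exact ⟨1, by funext i; rfl⟩

lemma resolve_perm (b : Fin 2 → Bid 4) (fuel : ℕ) (P : Fin 2 → Finset (Fin 4)) :
    ∃ σ : Equiv.Perm (Fin 2), resolve b fuel P = fun i => P (σ i) := by
  induction fuel generalizing P with
  | zero => exact ⟨1, funext fun i => rfl⟩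
  | succ n ih =>
    rw [resolve]
    split
    · exact ⟨1, funext fun i => rfl⟩
    · obtain ⟨τ, hτ⟩ := elimOnce_perm b P
      obtain ⟨σ, hσ⟩ := ih (elimOnce b P)
      refine ⟨σ.trans τ, ?_⟩
      rw [hσ, hτ]
      rfl

def Inv (s : (Fin 2 → Finset (Fin 4)) × Finset (Fin 4)) : Prop :=
  (∀ i j : Fin 2, i ≠ j → ∀ g, g ∈ s.1 i → g ∉ s.1 j) ∧
    (∀ (i : Fin 2) g, g ∈ s.1 i → g ∉ s.2)

lemma inv_pstate (b : Fin 2 → Bid 4) (k : ℕ) : Inv (pstate b k) := by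
  induction k with
  | zero =>
    rw [pstate, stateECE]
    exact ⟨fun i j _ g hg => absurd hg (Finset.notMem_empty g),
      fun i g hg => absurd hg (Finset.notMem_empty g)⟩
  | succ k ih =>
    rw [pstate] at ih ⊢
    rw [stateECE]
    obtain ⟨P, R, hPR⟩ : ∃ P R, stateECE b (priAgent b) (fun _ R hR => R.min' hR) k = (P, R) :=
      ⟨_, _, rfl⟩
    rw [hPR] at ih ⊢
    by_cases hR : R.Nonempty
    · rw [dif_pos hR]
      cases hpa : priAgent b P with
      | none => exact ih
      | some i =>
        show Inv (resolve b (2*2+1)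
          (fun j => if j = i then insert (R.min' hR) (P j) else P j), R.erase (R.min' hR))
        set g := R.min' hR with hgdef
        have hgR : g ∈ R := Finset.min'_mem R hR
        set P' := fun j => if j = i then insert g (P j) else P j with hP'
        have hinv1 : ∀ i' j' : Fin 2, i' ≠ j' → ∀ x, x ∈ P' i' → x ∉ P' j' := by
          intro i' j' hij x hx
          have hgnot : ∀ j : Fin 2, g ∉ P j := fun j hj => ih.2 j g hj hgR
          by_cases hi' : i' = i <;> by_cases hj' : j' = i
          · exact absurd (hi'.trans hj'.symm) hij
          · simp only [hP']
            rw [if_neg hj']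
            rcases Finset.mem_insert.1 (by simpa [hP', hi'] using hx) with rfl | hx'
            · exact hgnot j'
            · exact ih.1 i' j' hij x (by rw [hi']; exact hx')
          · simp only [hP']
            rw [if_pos hj']
            intro hmem
            rcases Finset.mem_insert.1 hmem with rfl | hx'
            · exact hgnot i' (by simpa [hP', hi'] using hx)
            · exact ih.1 i' j' hij x (by simpa [hP', hi'] using hx) hx'
          · simp only [hP']
            rw [if_neg hj']
            exact ih.1 i' j' hij x (by simpa [hP', hi'] using hx)
        have hinv2 : ∀ (i' : Fin 2) x, x ∈ P' i' → x ∉ R.erase g := by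
          intro i' x hx hmem
          have hxR : x ∈ R := Finset.mem_of_mem_erase hmem
          have hxg : x ≠ g := Finset.ne_of_mem_erase hmem
          by_cases hi' : i' = i
          · rcases Finset.mem_insert.1 (by simpa [hP', hi'] using hx) with rfl | hx'
            · exact hxg rfl
            · exact ih.2 i' x (by simpa [hi'] using hx') hxR
          · exact ih.2 i' x (by simpa [hP', hi'] using hx) hxR
        obtain ⟨σ, hσ⟩ := resolve_perm b (2*2+1) P'
        rw [hσ]
        exact ⟨fun i' j' hij x hx => hinv1 (σ i') (σ j') (fun h => hij (σ.injective h)) x hx,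
          fun i' x hx => hinv2 (σ i') x hx⟩
    · rw [dif_neg hR]
      exact ih

lemma vv_nonneg (g : Fin 4) : 0 ≤ vv g := by
  unfold vv; split <;> norm_num

lemma sum_le_three (b : Fin 2 → Bid 4) :
    value vv (Priority b 0) + value vv (Priority b 1) ≤ 3 := by
  rw [Priority_eq b]
  have hd : Disjoint ((pstate b 4).1 0) ((pstate b 4).1 1) :=
    have key : ∀ s, Inv s → Disjoint (s.1 0) (s.1 1) :=
      fun s hs => Finset.disjoint_left.2 fun g hg => hs.1 0 1 (by decide) g hg
    key (pstate b 4) (inv_pstate b 4)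
  rw [value, value, ← Finset.sum_union hd]
  calc ∑ g ∈ (pstate b 4).1 0 ∪ (pstate b 4).1 1, vv g
      ≤ ∑ g ∈ Finset.univ, vv g :=
        Finset.sum_le_sum_of_subset_of_nonneg (Finset.subset_univ _)
          (fun g _ _ => vv_nonneg g)
    _ = 3 := by rw [Fin.sum_univ_four, vv0, vv1, vv2, vv3]; norm_num
lemma nenv01_empty (b : Fin 2 → Bid 4) (S : Finset (Fin 4)) :
    ¬ envies b (alloc S ∅) 0 1 := by
  simp only [envies01_iff, bval_empty]
  exact not_lt.2 (bval_nonneg _ _)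

lemma pstate_one (b : Fin 2 → Bid 4) :
    pstate b 1 = (alloc {0} ∅, ({1,2,3} : Finset (Fin 4))) := by
  have h := pstate_succ0 (pstate_zero b) huniv 0 hmin_univ
    (priAgent_nn (lt_irrefl _) (lt_irrefl _))
  rw [show (insert (0:Fin 4) (∅ : Finset (Fin 4))) = ({0} : Finset (Fin 4)) from by decide] at h
  rw [h, resolve5_stop (Or.inl (nenv01_empty b {0})), he0]

lemma bv01 (c : Bid 4) : bval c {0,1} = c.val 0 + c.val 1 := bval_pair c (by decide)
lemma bv02 (c : Bid 4) : bval c {0,2} = c.val 0 + c.val 2 := bval_pair c (by decide)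
lemma bv03 (c : Bid 4) : bval c {0,3} = c.val 0 + c.val 3 := bval_pair c (by decide)
lemma bv12 (c : Bid 4) : bval c {1,2} = c.val 1 + c.val 2 := bval_pair c (by decide)
lemma bv13 (c : Bid 4) : bval c {1,3} = c.val 1 + c.val 3 := bval_pair c (by decide)
lemma bv23 (c : Bid 4) : bval c {2,3} = c.val 2 + c.val 3 := bval_pair c (by decide)
lemma bv012 (c : Bid 4) : bval c {0,1,2} = c.val 0 + c.val 1 + c.val 2 :=
  bval_triple c (by decide) (by decide) (by decide)
lemma bv013 (c : Bid 4) : bval c {0,1,3} = c.val 0 + c.val 1 + c.val 3 :=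
  bval_triple c (by decide) (by decide) (by decide)
lemma bv023 (c : Bid 4) : bval c {0,2,3} = c.val 0 + c.val 2 + c.val 3 :=
  bval_triple c (by decide) (by decide) (by decide)
lemma bv123 (c : Bid 4) : bval c {1,2,3} = c.val 1 + c.val 2 + c.val 3 :=
  bval_triple c (by decide) (by decide) (by decide)
lemma bv0123 (c : Bid 4) : bval c {0,1,2,3} = c.val 0 + c.val 1 + c.val 2 + c.val 3 :=
  bval_quad c (by decide) (by decide) (by decide) (by decide) (by decide) (by decide)

lemma leaf_a1a (b : Fin 2 → Bid 4) (ha0 : (b 0).val 0 = 0) (ha1 : (b 0).val 1 = 0) (ha2 : (b 0).val 2 = 1) (ha3 : (b 0).val 3 = 1) (hc0 : (b 1).val 0 = 0) (hc1 : 0 < (b 1).val 1) (hc2 : (b 1).val 2 < (b 1).val 1) :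
    Priority b 0 = ({2,3} : Finset (Fin 4)) := by
  have nn0 := (b 0).nonneg
  have nn1 := (b 1).nonneg
  have s1 := pstate_one b
  have e1 : ¬ envies b (alloc ({0} : Finset (Fin 4)) (∅ : Finset (Fin 4))) 1 0 := by
    simp only [envies01_iff, envies10_iff, bval_empty, bval_single, bv01, bv02, bv03, bv12, bv13, bv23, bv012, bv013, bv023, bv123, bv0123]
    push_neg
    linarith [nn0 0, nn0 1, nn0 2, nn0 3, nn1 0, nn1 1, nn1 2, nn1 3]
  have s2 := pstate_succ0 s1 hne123 1 hmin123 (priAgent_nn (nenv01_empty b ({0} : Finset (Fin 4))) e1)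
  rw [show (insert (1:Fin 4) ({0} : Finset (Fin 4))) = ({0,1} : Finset (Fin 4)) from by decide, he1] at s2
  rw [resolve5_stop (Or.inl (nenv01_empty b ({0,1} : Finset (Fin 4))))] at s2
  have e2 : envies b (alloc ({0,1} : Finset (Fin 4)) (∅ : Finset (Fin 4))) 1 0 := by
    simp only [envies01_iff, envies10_iff, bval_empty, bval_single, bv01, bv02, bv03, bv12, bv13, bv23, bv012, bv013, bv023, bv123, bv0123]
    linarith [nn0 0, nn0 1, nn0 2, nn0 3, nn1 0, nn1 1, nn1 2, nn1 3]
  have s3 := pstate_succ1 s2 hne23 2 hmin23 (priAgent_10 (nenv01_empty b ({0,1} : Finset (Fin 4))) e2)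
  rw [show (insert (2:Fin 4) (∅ : Finset (Fin 4))) = ({2} : Finset (Fin 4)) from by decide, he2] at s3
  have e3 : envies b (alloc ({0,1} : Finset (Fin 4)) ({2} : Finset (Fin 4))) 0 1 := by
    simp only [envies01_iff, envies10_iff, bval_empty, bval_single, bv01, bv02, bv03, bv12, bv13, bv23, bv012, bv013, bv023, bv123, bv0123]
    linarith [nn0 0, nn0 1, nn0 2, nn0 3, nn1 0, nn1 1, nn1 2, nn1 3]
  have e4 : envies b (alloc ({0,1} : Finset (Fin 4)) ({2} : Finset (Fin 4))) 1 0 := by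
    simp only [envies01_iff, envies10_iff, bval_empty, bval_single, bv01, bv02, bv03, bv12, bv13, bv23, bv012, bv013, bv023, bv123, bv0123]
    linarith [nn0 0, nn0 1, nn0 2, nn0 3, nn1 0, nn1 1, nn1 2, nn1 3]
  rw [resolve5_swap e3 e4] at s3
  have e5 : ¬ envies b (alloc ({2} : Finset (Fin 4)) ({0,1} : Finset (Fin 4))) 0 1 := by
    simp only [envies01_iff, envies10_iff, bval_empty, bval_single, bv01, bv02, bv03, bv12, bv13, bv23, bv012, bv013, bv023, bv123, bv0123]
    push_neg
    linarith [nn0 0, nn0 1, nn0 2, nn0 3, nn1 0, nn1 1, nn1 2, nn1 3]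
  have e6 : ¬ envies b (alloc ({2} : Finset (Fin 4)) ({0,1} : Finset (Fin 4))) 1 0 := by
    simp only [envies01_iff, envies10_iff, bval_empty, bval_single, bv01, bv02, bv03, bv12, bv13, bv23, bv012, bv013, bv023, bv123, bv0123]
    push_neg
    linarith [nn0 0, nn0 1, nn0 2, nn0 3, nn1 0, nn1 1, nn1 2, nn1 3]
  have s4 := pstate_succ0 s3 hne3 3 hmin3 (priAgent_nn e5 e6)
  rw [show (insert (3:Fin 4) ({2} : Finset (Fin 4))) = ({2,3} : Finset (Fin 4)) from by decide, he3] at s4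
  have e7 : ¬ envies b (alloc ({2,3} : Finset (Fin 4)) ({0,1} : Finset (Fin 4))) 0 1 := by
    simp only [envies01_iff, envies10_iff, bval_empty, bval_single, bv01, bv02, bv03, bv12, bv13, bv23, bv012, bv013, bv023, bv123, bv0123]
    push_neg
    linarith [nn0 0, nn0 1, nn0 2, nn0 3, nn1 0, nn1 1, nn1 2, nn1 3]
  rw [resolve5_stop (Or.inl e7)] at s4
  rw [Priority_eq b, s4]
  rfl

lemma leaf_a1b (b : Fin 2 → Bid 4) (ha0 : (b 0).val 0 = 0) (ha1 : (b 0).val 1 = 0) (ha2 : (b 0).val 2 = 1) (ha3 : (b 0).val 3 = 1) (hc0 : (b 1).val 0 = 0) (hc1 : 0 < (b 1).val 1) (hc2 : (b 1).val 1 ≤ (b 1).val 2) :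
    Priority b 0 = ({0,1,3} : Finset (Fin 4)) := by
  have nn0 := (b 0).nonneg
  have nn1 := (b 1).nonneg
  have s1 := pstate_one b
  have e1 : ¬ envies b (alloc ({0} : Finset (Fin 4)) (∅ : Finset (Fin 4))) 1 0 := by
    simp only [envies01_iff, envies10_iff, bval_empty, bval_single, bv01, bv02, bv03, bv12, bv13, bv23, bv012, bv013, bv023, bv123, bv0123]
    push_neg
    linarith [nn0 0, nn0 1, nn0 2, nn0 3, nn1 0, nn1 1, nn1 2, nn1 3]
  have s2 := pstate_succ0 s1 hne123 1 hmin123 (priAgent_nn (nenv01_empty b ({0} : Finset (Fin 4))) e1)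
  rw [show (insert (1:Fin 4) ({0} : Finset (Fin 4))) = ({0,1} : Finset (Fin 4)) from by decide, he1] at s2
  rw [resolve5_stop (Or.inl (nenv01_empty b ({0,1} : Finset (Fin 4))))] at s2
  have e2 : envies b (alloc ({0,1} : Finset (Fin 4)) (∅ : Finset (Fin 4))) 1 0 := by
    simp only [envies01_iff, envies10_iff, bval_empty, bval_single, bv01, bv02, bv03, bv12, bv13, bv23, bv012, bv013, bv023, bv123, bv0123]
    linarith [nn0 0, nn0 1, nn0 2, nn0 3, nn1 0, nn1 1, nn1 2, nn1 3]
  have s3 := pstate_succ1 s2 hne23 2 hmin23 (priAgent_10 (nenv01_empty b ({0,1} : Finset (Fin 4))) e2)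
  rw [show (insert (2:Fin 4) (∅ : Finset (Fin 4))) = ({2} : Finset (Fin 4)) from by decide, he2] at s3
  have e3 : ¬ envies b (alloc ({0,1} : Finset (Fin 4)) ({2} : Finset (Fin 4))) 1 0 := by
    simp only [envies01_iff, envies10_iff, bval_empty, bval_single, bv01, bv02, bv03, bv12, bv13, bv23, bv012, bv013, bv023, bv123, bv0123]
    push_neg
    linarith [nn0 0, nn0 1, nn0 2, nn0 3, nn1 0, nn1 1, nn1 2, nn1 3]
  rw [resolve5_stop (Or.inr e3)] at s3
  have e4 : envies b (alloc ({0,1} : Finset (Fin 4)) ({2} : Finset (Fin 4))) 0 1 := by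
    simp only [envies01_iff, envies10_iff, bval_empty, bval_single, bv01, bv02, bv03, bv12, bv13, bv23, bv012, bv013, bv023, bv123, bv0123]
    linarith [nn0 0, nn0 1, nn0 2, nn0 3, nn1 0, nn1 1, nn1 2, nn1 3]
  have e5 : ¬ envies b (alloc ({0,1} : Finset (Fin 4)) ({2} : Finset (Fin 4))) 1 0 := by
    simp only [envies01_iff, envies10_iff, bval_empty, bval_single, bv01, bv02, bv03, bv12, bv13, bv23, bv012, bv013, bv023, bv123, bv0123]
    push_neg
    linarith [nn0 0, nn0 1, nn0 2, nn0 3, nn1 0, nn1 1, nn1 2, nn1 3]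
  have s4 := pstate_succ0 s3 hne3 3 hmin3 (priAgent_01 e4 e5)
  rw [show (insert (3:Fin 4) ({0,1} : Finset (Fin 4))) = ({0,1,3} : Finset (Fin 4)) from by decide, he3] at s4
  have e6 : ¬ envies b (alloc ({0,1,3} : Finset (Fin 4)) ({2} : Finset (Fin 4))) 0 1 := by
    simp only [envies01_iff, envies10_iff, bval_empty, bval_single, bv01, bv02, bv03, bv12, bv13, bv23, bv012, bv013, bv023, bv123, bv0123]
    push_neg
    linarith [nn0 0, nn0 1, nn0 2, nn0 3, nn1 0, nn1 1, nn1 2, nn1 3]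
  rw [resolve5_stop (Or.inl e6)] at s4
  rw [Priority_eq b, s4]
  rfl

lemma leaf_a2a (b : Fin 2 → Bid 4) (ha0 : (b 0).val 0 = 0) (ha1 : (b 0).val 1 = 0) (ha2 : (b 0).val 2 = 1) (ha3 : (b 0).val 3 = 1) (hc0 : (b 1).val 0 = 0) (hc1 : (b 1).val 1 = 0) (hc2 : 0 < (b 1).val 2) :
    Priority b 0 = ({0,1,2} : Finset (Fin 4)) := by
  have nn0 := (b 0).nonneg
  have nn1 := (b 1).nonneg
  have s1 := pstate_one b
  have e1 : ¬ envies b (alloc ({0} : Finset (Fin 4)) (∅ : Finset (Fin 4))) 1 0 := by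
    simp only [envies01_iff, envies10_iff, bval_empty, bval_single, bv01, bv02, bv03, bv12, bv13, bv23, bv012, bv013, bv023, bv123, bv0123]
    push_neg
    linarith [nn0 0, nn0 1, nn0 2, nn0 3, nn1 0, nn1 1, nn1 2, nn1 3]
  have s2 := pstate_succ0 s1 hne123 1 hmin123 (priAgent_nn (nenv01_empty b ({0} : Finset (Fin 4))) e1)
  rw [show (insert (1:Fin 4) ({0} : Finset (Fin 4))) = ({0,1} : Finset (Fin 4)) from by decide, he1] at s2
  rw [resolve5_stop (Or.inl (nenv01_empty b ({0,1} : Finset (Fin 4))))] at s2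
  have e2 : ¬ envies b (alloc ({0,1} : Finset (Fin 4)) (∅ : Finset (Fin 4))) 1 0 := by
    simp only [envies01_iff, envies10_iff, bval_empty, bval_single, bv01, bv02, bv03, bv12, bv13, bv23, bv012, bv013, bv023, bv123, bv0123]
    push_neg
    linarith [nn0 0, nn0 1, nn0 2, nn0 3, nn1 0, nn1 1, nn1 2, nn1 3]
  have s3 := pstate_succ0 s2 hne23 2 hmin23 (priAgent_nn (nenv01_empty b ({0,1} : Finset (Fin 4))) e2)
  rw [show (insert (2:Fin 4) ({0,1} : Finset (Fin 4))) = ({0,1,2} : Finset (Fin 4)) from by decide, he2] at s3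
  rw [resolve5_stop (Or.inl (nenv01_empty b ({0,1,2} : Finset (Fin 4))))] at s3
  have e3 : envies b (alloc ({0,1,2} : Finset (Fin 4)) (∅ : Finset (Fin 4))) 1 0 := by
    simp only [envies01_iff, envies10_iff, bval_empty, bval_single, bv01, bv02, bv03, bv12, bv13, bv23, bv012, bv013, bv023, bv123, bv0123]
    linarith [nn0 0, nn0 1, nn0 2, nn0 3, nn1 0, nn1 1, nn1 2, nn1 3]
  have s4 := pstate_succ1 s3 hne3 3 hmin3 (priAgent_10 (nenv01_empty b ({0,1,2} : Finset (Fin 4))) e3)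
  rw [show (insert (3:Fin 4) (∅ : Finset (Fin 4))) = ({3} : Finset (Fin 4)) from by decide, he3] at s4
  have e4 : ¬ envies b (alloc ({0,1,2} : Finset (Fin 4)) ({3} : Finset (Fin 4))) 0 1 := by
    simp only [envies01_iff, envies10_iff, bval_empty, bval_single, bv01, bv02, bv03, bv12, bv13, bv23, bv012, bv013, bv023, bv123, bv0123]
    push_neg
    linarith [nn0 0, nn0 1, nn0 2, nn0 3, nn1 0, nn1 1, nn1 2, nn1 3]
  rw [resolve5_stop (Or.inl e4)] at s4
  rw [Priority_eq b, s4]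
  rfl

lemma leaf_a2b (b : Fin 2 → Bid 4) (ha0 : (b 0).val 0 = 0) (ha1 : (b 0).val 1 = 0) (ha2 : (b 0).val 2 = 1) (ha3 : (b 0).val 3 = 1) (hc0 : (b 1).val 0 = 0) (hc1 : (b 1).val 1 = 0) (hc2 : (b 1).val 2 = 0) :
    Priority b 0 = ({0,1,2,3} : Finset (Fin 4)) := by
  have nn0 := (b 0).nonneg
  have nn1 := (b 1).nonneg
  have s1 := pstate_one b
  have e1 : ¬ envies b (alloc ({0} : Finset (Fin 4)) (∅ : Finset (Fin 4))) 1 0 := by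
    simp only [envies01_iff, envies10_iff, bval_empty, bval_single, bv01, bv02, bv03, bv12, bv13, bv23, bv012, bv013, bv023, bv123, bv0123]
    push_neg
    linarith [nn0 0, nn0 1, nn0 2, nn0 3, nn1 0, nn1 1, nn1 2, nn1 3]
  have s2 := pstate_succ0 s1 hne123 1 hmin123 (priAgent_nn (nenv01_empty b ({0} : Finset (Fin 4))) e1)
  rw [show (insert (1:Fin 4) ({0} : Finset (Fin 4))) = ({0,1} : Finset (Fin 4)) from by decide, he1] at s2
  rw [resolve5_stop (Or.inl (nenv01_empty b ({0,1} : Finset (Fin 4))))] at s2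
  have e2 : ¬ envies b (alloc ({0,1} : Finset (Fin 4)) (∅ : Finset (Fin 4))) 1 0 := by
    simp only [envies01_iff, envies10_iff, bval_empty, bval_single, bv01, bv02, bv03, bv12, bv13, bv23, bv012, bv013, bv023, bv123, bv0123]
    push_neg
    linarith [nn0 0, nn0 1, nn0 2, nn0 3, nn1 0, nn1 1, nn1 2, nn1 3]
  have s3 := pstate_succ0 s2 hne23 2 hmin23 (priAgent_nn (nenv01_empty b ({0,1} : Finset (Fin 4))) e2)
  rw [show (insert (2:Fin 4) ({0,1} : Finset (Fin 4))) = ({0,1,2} : Finset (Fin 4)) from by decide, he2] at s3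
  rw [resolve5_stop (Or.inl (nenv01_empty b ({0,1,2} : Finset (Fin 4))))] at s3
  have e3 : ¬ envies b (alloc ({0,1,2} : Finset (Fin 4)) (∅ : Finset (Fin 4))) 1 0 := by
    simp only [envies01_iff, envies10_iff, bval_empty, bval_single, bv01, bv02, bv03, bv12, bv13, bv23, bv012, bv013, bv023, bv123, bv0123]
    push_neg
    linarith [nn0 0, nn0 1, nn0 2, nn0 3, nn1 0, nn1 1, nn1 2, nn1 3]
  have s4 := pstate_succ0 s3 hne3 3 hmin3 (priAgent_nn (nenv01_empty b ({0,1,2} : Finset (Fin 4))) e3)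
  rw [show (insert (3:Fin 4) ({0,1,2} : Finset (Fin 4))) = ({0,1,2,3} : Finset (Fin 4)) from by decide, he3] at s4
  rw [resolve5_stop (Or.inl (nenv01_empty b ({0,1,2,3} : Finset (Fin 4))))] at s4
  rw [Priority_eq b, s4]
  rfl

lemma leaf_b1a (b : Fin 2 → Bid 4) (ha0 : (b 0).val 0 = 0) (ha1 : (b 0).val 1 = 1) (ha2 : (b 0).val 2 = 0) (ha3 : (b 0).val 3 = 0) (hc0 : 0 < (b 1).val 0) (hc1 : (b 1).val 1 < (b 1).val 0) (hc2 : (b 1).val 0 < (b 1).val 1 + (b 1).val 2) :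
    Priority b 0 = ({1,2} : Finset (Fin 4)) := by
  have nn0 := (b 0).nonneg
  have nn1 := (b 1).nonneg
  have s1 := pstate_one b
  have e1 : envies b (alloc ({0} : Finset (Fin 4)) (∅ : Finset (Fin 4))) 1 0 := by
    simp only [envies01_iff, envies10_iff, bval_empty, bval_single, bv01, bv02, bv03, bv12, bv13, bv23, bv012, bv013, bv023, bv123, bv0123]
    linarith [nn0 0, nn0 1, nn0 2, nn0 3, nn1 0, nn1 1, nn1 2, nn1 3]
  have s2 := pstate_succ1 s1 hne123 1 hmin123 (priAgent_10 (nenv01_empty b ({0} : Finset (Fin 4))) e1)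
  rw [show (insert (1:Fin 4) (∅ : Finset (Fin 4))) = ({1} : Finset (Fin 4)) from by decide, he1] at s2
  have e2 : envies b (alloc ({0} : Finset (Fin 4)) ({1} : Finset (Fin 4))) 0 1 := by
    simp only [envies01_iff, envies10_iff, bval_empty, bval_single, bv01, bv02, bv03, bv12, bv13, bv23, bv012, bv013, bv023, bv123, bv0123]
    linarith [nn0 0, nn0 1, nn0 2, nn0 3, nn1 0, nn1 1, nn1 2, nn1 3]
  have e3 : envies b (alloc ({0} : Finset (Fin 4)) ({1} : Finset (Fin 4))) 1 0 := by
    simp only [envies01_iff, envies10_iff, bval_empty, bval_single, bv01, bv02, bv03, bv12, bv13, bv23, bv012, bv013, bv023, bv123, bv0123]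
    linarith [nn0 0, nn0 1, nn0 2, nn0 3, nn1 0, nn1 1, nn1 2, nn1 3]
  rw [resolve5_swap e2 e3] at s2
  have e4 : ¬ envies b (alloc ({1} : Finset (Fin 4)) ({0} : Finset (Fin 4))) 0 1 := by
    simp only [envies01_iff, envies10_iff, bval_empty, bval_single, bv01, bv02, bv03, bv12, bv13, bv23, bv012, bv013, bv023, bv123, bv0123]
    push_neg
    linarith [nn0 0, nn0 1, nn0 2, nn0 3, nn1 0, nn1 1, nn1 2, nn1 3]
  have e5 : ¬ envies b (alloc ({1} : Finset (Fin 4)) ({0} : Finset (Fin 4))) 1 0 := by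
    simp only [envies01_iff, envies10_iff, bval_empty, bval_single, bv01, bv02, bv03, bv12, bv13, bv23, bv012, bv013, bv023, bv123, bv0123]
    push_neg
    linarith [nn0 0, nn0 1, nn0 2, nn0 3, nn1 0, nn1 1, nn1 2, nn1 3]
  have s3 := pstate_succ0 s2 hne23 2 hmin23 (priAgent_nn e4 e5)
  rw [show (insert (2:Fin 4) ({1} : Finset (Fin 4))) = ({1,2} : Finset (Fin 4)) from by decide, he2] at s3
  have e6 : ¬ envies b (alloc ({1,2} : Finset (Fin 4)) ({0} : Finset (Fin 4))) 0 1 := by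
    simp only [envies01_iff, envies10_iff, bval_empty, bval_single, bv01, bv02, bv03, bv12, bv13, bv23, bv012, bv013, bv023, bv123, bv0123]
    push_neg
    linarith [nn0 0, nn0 1, nn0 2, nn0 3, nn1 0, nn1 1, nn1 2, nn1 3]
  rw [resolve5_stop (Or.inl e6)] at s3
  have e7 : ¬ envies b (alloc ({1,2} : Finset (Fin 4)) ({0} : Finset (Fin 4))) 0 1 := by
    simp only [envies01_iff, envies10_iff, bval_empty, bval_single, bv01, bv02, bv03, bv12, bv13, bv23, bv012, bv013, bv023, bv123, bv0123]
    push_neg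
    linarith [nn0 0, nn0 1, nn0 2, nn0 3, nn1 0, nn1 1, nn1 2, nn1 3]
  have e8 : envies b (alloc ({1,2} : Finset (Fin 4)) ({0} : Finset (Fin 4))) 1 0 := by
    simp only [envies01_iff, envies10_iff, bval_empty, bval_single, bv01, bv02, bv03, bv12, bv13, bv23, bv012, bv013, bv023, bv123, bv0123]
    linarith [nn0 0, nn0 1, nn0 2, nn0 3, nn1 0, nn1 1, nn1 2, nn1 3]
  have s4 := pstate_succ1 s3 hne3 3 hmin3 (priAgent_10 e7 e8)
  rw [show (insert (3:Fin 4) ({0} : Finset (Fin 4))) = ({0,3} : Finset (Fin 4)) from by decide, he3] at s4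
  have e9 : ¬ envies b (alloc ({1,2} : Finset (Fin 4)) ({0,3} : Finset (Fin 4))) 0 1 := by
    simp only [envies01_iff, envies10_iff, bval_empty, bval_single, bv01, bv02, bv03, bv12, bv13, bv23, bv012, bv013, bv023, bv123, bv0123]
    push_neg
    linarith [nn0 0, nn0 1, nn0 2, nn0 3, nn1 0, nn1 1, nn1 2, nn1 3]
  rw [resolve5_stop (Or.inl e9)] at s4
  rw [Priority_eq b, s4]
  rfl

lemma leaf_b1b (b : Fin 2 → Bid 4) (ha0 : (b 0).val 0 = 0) (ha1 : (b 0).val 1 = 1) (ha2 : (b 0).val 2 = 0) (ha3 : (b 0).val 3 = 0) (hc0 : 0 < (b 1).val 0) (hc1 : (b 1).val 1 < (b 1).val 0) (hc2 : (b 1).val 1 + (b 1).val 2 ≤ (b 1).val 0) :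
    Priority b 0 = ({1,2,3} : Finset (Fin 4)) := by
  have nn0 := (b 0).nonneg
  have nn1 := (b 1).nonneg
  have s1 := pstate_one b
  have e1 : envies b (alloc ({0} : Finset (Fin 4)) (∅ : Finset (Fin 4))) 1 0 := by
    simp only [envies01_iff, envies10_iff, bval_empty, bval_single, bv01, bv02, bv03, bv12, bv13, bv23, bv012, bv013, bv023, bv123, bv0123]
    linarith [nn0 0, nn0 1, nn0 2, nn0 3, nn1 0, nn1 1, nn1 2, nn1 3]
  have s2 := pstate_succ1 s1 hne123 1 hmin123 (priAgent_10 (nenv01_empty b ({0} : Finset (Fin 4))) e1)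
  rw [show (insert (1:Fin 4) (∅ : Finset (Fin 4))) = ({1} : Finset (Fin 4)) from by decide, he1] at s2
  have e2 : envies b (alloc ({0} : Finset (Fin 4)) ({1} : Finset (Fin 4))) 0 1 := by
    simp only [envies01_iff, envies10_iff, bval_empty, bval_single, bv01, bv02, bv03, bv12, bv13, bv23, bv012, bv013, bv023, bv123, bv0123]
    linarith [nn0 0, nn0 1, nn0 2, nn0 3, nn1 0, nn1 1, nn1 2, nn1 3]
  have e3 : envies b (alloc ({0} : Finset (Fin 4)) ({1} : Finset (Fin 4))) 1 0 := by
    simp only [envies01_iff, envies10_iff, bval_empty, bval_single, bv01, bv02, bv03, bv12, bv13, bv23, bv012, bv013, bv023, bv123, bv0123]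
    linarith [nn0 0, nn0 1, nn0 2, nn0 3, nn1 0, nn1 1, nn1 2, nn1 3]
  rw [resolve5_swap e2 e3] at s2
  have e4 : ¬ envies b (alloc ({1} : Finset (Fin 4)) ({0} : Finset (Fin 4))) 0 1 := by
    simp only [envies01_iff, envies10_iff, bval_empty, bval_single, bv01, bv02, bv03, bv12, bv13, bv23, bv012, bv013, bv023, bv123, bv0123]
    push_neg
    linarith [nn0 0, nn0 1, nn0 2, nn0 3, nn1 0, nn1 1, nn1 2, nn1 3]
  have e5 : ¬ envies b (alloc ({1} : Finset (Fin 4)) ({0} : Finset (Fin 4))) 1 0 := by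
    simp only [envies01_iff, envies10_iff, bval_empty, bval_single, bv01, bv02, bv03, bv12, bv13, bv23, bv012, bv013, bv023, bv123, bv0123]
    push_neg
    linarith [nn0 0, nn0 1, nn0 2, nn0 3, nn1 0, nn1 1, nn1 2, nn1 3]
  have s3 := pstate_succ0 s2 hne23 2 hmin23 (priAgent_nn e4 e5)
  rw [show (insert (2:Fin 4) ({1} : Finset (Fin 4))) = ({1,2} : Finset (Fin 4)) from by decide, he2] at s3
  have e6 : ¬ envies b (alloc ({1,2} : Finset (Fin 4)) ({0} : Finset (Fin 4))) 0 1 := by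
    simp only [envies01_iff, envies10_iff, bval_empty, bval_single, bv01, bv02, bv03, bv12, bv13, bv23, bv012, bv013, bv023, bv123, bv0123]
    push_neg
    linarith [nn0 0, nn0 1, nn0 2, nn0 3, nn1 0, nn1 1, nn1 2, nn1 3]
  rw [resolve5_stop (Or.inl e6)] at s3
  have e7 : ¬ envies b (alloc ({1,2} : Finset (Fin 4)) ({0} : Finset (Fin 4))) 0 1 := by
    simp only [envies01_iff, envies10_iff, bval_empty, bval_single, bv01, bv02, bv03, bv12, bv13, bv23, bv012, bv013, bv023, bv123, bv0123]
    push_neg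
    linarith [nn0 0, nn0 1, nn0 2, nn0 3, nn1 0, nn1 1, nn1 2, nn1 3]
  have e8 : ¬ envies b (alloc ({1,2} : Finset (Fin 4)) ({0} : Finset (Fin 4))) 1 0 := by
    simp only [envies01_iff, envies10_iff, bval_empty, bval_single, bv01, bv02, bv03, bv12, bv13, bv23, bv012, bv013, bv023, bv123, bv0123]
    push_neg
    linarith [nn0 0, nn0 1, nn0 2, nn0 3, nn1 0, nn1 1, nn1 2, nn1 3]
  have s4 := pstate_succ0 s3 hne3 3 hmin3 (priAgent_nn e7 e8)
  rw [show (insert (3:Fin 4) ({1,2} : Finset (Fin 4))) = ({1,2,3} : Finset (Fin 4)) from by decide, he3] at s4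
  have e9 : ¬ envies b (alloc ({1,2,3} : Finset (Fin 4)) ({0} : Finset (Fin 4))) 0 1 := by
    simp only [envies01_iff, envies10_iff, bval_empty, bval_single, bv01, bv02, bv03, bv12, bv13, bv23, bv012, bv013, bv023, bv123, bv0123]
    push_neg
    linarith [nn0 0, nn0 1, nn0 2, nn0 3, nn1 0, nn1 1, nn1 2, nn1 3]
  rw [resolve5_stop (Or.inl e9)] at s4
  rw [Priority_eq b, s4]
  rfl

lemma leaf_b2a (b : Fin 2 → Bid 4) (ha0 : (b 0).val 0 = 0) (ha1 : (b 0).val 1 = 0) (ha2 : (b 0).val 2 = 1) (ha3 : (b 0).val 3 = 1) (hc0 : 0 < (b 1).val 0) (hc1 : (b 1).val 0 ≤ (b 1).val 1) (hc2 : (b 1).val 0 + (b 1).val 2 ≤ (b 1).val 1) :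
    Priority b 0 = ({0,2,3} : Finset (Fin 4)) := by
  have nn0 := (b 0).nonneg
  have nn1 := (b 1).nonneg
  have s1 := pstate_one b
  have e1 : envies b (alloc ({0} : Finset (Fin 4)) (∅ : Finset (Fin 4))) 1 0 := by
    simp only [envies01_iff, envies10_iff, bval_empty, bval_single, bv01, bv02, bv03, bv12, bv13, bv23, bv012, bv013, bv023, bv123, bv0123]
    linarith [nn0 0, nn0 1, nn0 2, nn0 3, nn1 0, nn1 1, nn1 2, nn1 3]
  have s2 := pstate_succ1 s1 hne123 1 hmin123 (priAgent_10 (nenv01_empty b ({0} : Finset (Fin 4))) e1)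
  rw [show (insert (1:Fin 4) (∅ : Finset (Fin 4))) = ({1} : Finset (Fin 4)) from by decide, he1] at s2
  have e2 : ¬ envies b (alloc ({0} : Finset (Fin 4)) ({1} : Finset (Fin 4))) 0 1 := by
    simp only [envies01_iff, envies10_iff, bval_empty, bval_single, bv01, bv02, bv03, bv12, bv13, bv23, bv012, bv013, bv023, bv123, bv0123]
    push_neg
    linarith [nn0 0, nn0 1, nn0 2, nn0 3, nn1 0, nn1 1, nn1 2, nn1 3]
  rw [resolve5_stop (Or.inl e2)] at s2
  have e3 : ¬ envies b (alloc ({0} : Finset (Fin 4)) ({1} : Finset (Fin 4))) 0 1 := by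
    simp only [envies01_iff, envies10_iff, bval_empty, bval_single, bv01, bv02, bv03, bv12, bv13, bv23, bv012, bv013, bv023, bv123, bv0123]
    push_neg
    linarith [nn0 0, nn0 1, nn0 2, nn0 3, nn1 0, nn1 1, nn1 2, nn1 3]
  have e4 : ¬ envies b (alloc ({0} : Finset (Fin 4)) ({1} : Finset (Fin 4))) 1 0 := by
    simp only [envies01_iff, envies10_iff, bval_empty, bval_single, bv01, bv02, bv03, bv12, bv13, bv23, bv012, bv013, bv023, bv123, bv0123]
    push_neg
    linarith [nn0 0, nn0 1, nn0 2, nn0 3, nn1 0, nn1 1, nn1 2, nn1 3]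
  have s3 := pstate_succ0 s2 hne23 2 hmin23 (priAgent_nn e3 e4)
  rw [show (insert (2:Fin 4) ({0} : Finset (Fin 4))) = ({0,2} : Finset (Fin 4)) from by decide, he2] at s3
  have e5 : ¬ envies b (alloc ({0,2} : Finset (Fin 4)) ({1} : Finset (Fin 4))) 0 1 := by
    simp only [envies01_iff, envies10_iff, bval_empty, bval_single, bv01, bv02, bv03, bv12, bv13, bv23, bv012, bv013, bv023, bv123, bv0123]
    push_neg
    linarith [nn0 0, nn0 1, nn0 2, nn0 3, nn1 0, nn1 1, nn1 2, nn1 3]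
  rw [resolve5_stop (Or.inl e5)] at s3
  have e6 : ¬ envies b (alloc ({0,2} : Finset (Fin 4)) ({1} : Finset (Fin 4))) 0 1 := by
    simp only [envies01_iff, envies10_iff, bval_empty, bval_single, bv01, bv02, bv03, bv12, bv13, bv23, bv012, bv013, bv023, bv123, bv0123]
    push_neg
    linarith [nn0 0, nn0 1, nn0 2, nn0 3, nn1 0, nn1 1, nn1 2, nn1 3]
  have e7 : ¬ envies b (alloc ({0,2} : Finset (Fin 4)) ({1} : Finset (Fin 4))) 1 0 := by
    simp only [envies01_iff, envies10_iff, bval_empty, bval_single, bv01, bv02, bv03, bv12, bv13, bv23, bv012, bv013, bv023, bv123, bv0123]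
    push_neg
    linarith [nn0 0, nn0 1, nn0 2, nn0 3, nn1 0, nn1 1, nn1 2, nn1 3]
  have s4 := pstate_succ0 s3 hne3 3 hmin3 (priAgent_nn e6 e7)
  rw [show (insert (3:Fin 4) ({0,2} : Finset (Fin 4))) = ({0,2,3} : Finset (Fin 4)) from by decide, he3] at s4
  have e8 : ¬ envies b (alloc ({0,2,3} : Finset (Fin 4)) ({1} : Finset (Fin 4))) 0 1 := by
    simp only [envies01_iff, envies10_iff, bval_empty, bval_single, bv01, bv02, bv03, bv12, bv13, bv23, bv012, bv013, bv023, bv123, bv0123]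
    push_neg
    linarith [nn0 0, nn0 1, nn0 2, nn0 3, nn1 0, nn1 1, nn1 2, nn1 3]
  rw [resolve5_stop (Or.inl e8)] at s4
  rw [Priority_eq b, s4]
  rfl

lemma leaf_b2b (b : Fin 2 → Bid 4) (ha0 : (b 0).val 0 = 0) (ha1 : (b 0).val 1 = 1) (ha2 : (b 0).val 2 = 0) (ha3 : (b 0).val 3 = 0) (hc0 : 0 < (b 1).val 0) (hc1 : (b 1).val 0 ≤ (b 1).val 1) (hc2 : (b 1).val 1 < (b 1).val 0 + (b 1).val 2) :
    Priority b 0 = ({1,3} : Finset (Fin 4)) := by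
  have nn0 := (b 0).nonneg
  have nn1 := (b 1).nonneg
  have s1 := pstate_one b
  have e1 : envies b (alloc ({0} : Finset (Fin 4)) (∅ : Finset (Fin 4))) 1 0 := by
    simp only [envies01_iff, envies10_iff, bval_empty, bval_single, bv01, bv02, bv03, bv12, bv13, bv23, bv012, bv013, bv023, bv123, bv0123]
    linarith [nn0 0, nn0 1, nn0 2, nn0 3, nn1 0, nn1 1, nn1 2, nn1 3]
  have s2 := pstate_succ1 s1 hne123 1 hmin123 (priAgent_10 (nenv01_empty b ({0} : Finset (Fin 4))) e1)
  rw [show (insert (1:Fin 4) (∅ : Finset (Fin 4))) = ({1} : Finset (Fin 4)) from by decide, he1] at s2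
  have e2 : ¬ envies b (alloc ({0} : Finset (Fin 4)) ({1} : Finset (Fin 4))) 1 0 := by
    simp only [envies01_iff, envies10_iff, bval_empty, bval_single, bv01, bv02, bv03, bv12, bv13, bv23, bv012, bv013, bv023, bv123, bv0123]
    push_neg
    linarith [nn0 0, nn0 1, nn0 2, nn0 3, nn1 0, nn1 1, nn1 2, nn1 3]
  rw [resolve5_stop (Or.inr e2)] at s2
  have e3 : envies b (alloc ({0} : Finset (Fin 4)) ({1} : Finset (Fin 4))) 0 1 := by
    simp only [envies01_iff, envies10_iff, bval_empty, bval_single, bv01, bv02, bv03, bv12, bv13, bv23, bv012, bv013, bv023, bv123, bv0123]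
    linarith [nn0 0, nn0 1, nn0 2, nn0 3, nn1 0, nn1 1, nn1 2, nn1 3]
  have e4 : ¬ envies b (alloc ({0} : Finset (Fin 4)) ({1} : Finset (Fin 4))) 1 0 := by
    simp only [envies01_iff, envies10_iff, bval_empty, bval_single, bv01, bv02, bv03, bv12, bv13, bv23, bv012, bv013, bv023, bv123, bv0123]
    push_neg
    linarith [nn0 0, nn0 1, nn0 2, nn0 3, nn1 0, nn1 1, nn1 2, nn1 3]
  have s3 := pstate_succ0 s2 hne23 2 hmin23 (priAgent_01 e3 e4)
  rw [show (insert (2:Fin 4) ({0} : Finset (Fin 4))) = ({0,2} : Finset (Fin 4)) from by decide, he2] at s3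
  have e5 : envies b (alloc ({0,2} : Finset (Fin 4)) ({1} : Finset (Fin 4))) 0 1 := by
    simp only [envies01_iff, envies10_iff, bval_empty, bval_single, bv01, bv02, bv03, bv12, bv13, bv23, bv012, bv013, bv023, bv123, bv0123]
    linarith [nn0 0, nn0 1, nn0 2, nn0 3, nn1 0, nn1 1, nn1 2, nn1 3]
  have e6 : envies b (alloc ({0,2} : Finset (Fin 4)) ({1} : Finset (Fin 4))) 1 0 := by
    simp only [envies01_iff, envies10_iff, bval_empty, bval_single, bv01, bv02, bv03, bv12, bv13, bv23, bv012, bv013, bv023, bv123, bv0123]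
    linarith [nn0 0, nn0 1, nn0 2, nn0 3, nn1 0, nn1 1, nn1 2, nn1 3]
  rw [resolve5_swap e5 e6] at s3
  have e7 : ¬ envies b (alloc ({1} : Finset (Fin 4)) ({0,2} : Finset (Fin 4))) 0 1 := by
    simp only [envies01_iff, envies10_iff, bval_empty, bval_single, bv01, bv02, bv03, bv12, bv13, bv23, bv012, bv013, bv023, bv123, bv0123]
    push_neg
    linarith [nn0 0, nn0 1, nn0 2, nn0 3, nn1 0, nn1 1, nn1 2, nn1 3]
  have e8 : ¬ envies b (alloc ({1} : Finset (Fin 4)) ({0,2} : Finset (Fin 4))) 1 0 := by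
    simp only [envies01_iff, envies10_iff, bval_empty, bval_single, bv01, bv02, bv03, bv12, bv13, bv23, bv012, bv013, bv023, bv123, bv0123]
    push_neg
    linarith [nn0 0, nn0 1, nn0 2, nn0 3, nn1 0, nn1 1, nn1 2, nn1 3]
  have s4 := pstate_succ0 s3 hne3 3 hmin3 (priAgent_nn e7 e8)
  rw [show (insert (3:Fin 4) ({1} : Finset (Fin 4))) = ({1,3} : Finset (Fin 4)) from by decide, he3] at s4
  have e9 : ¬ envies b (alloc ({1,3} : Finset (Fin 4)) ({0,2} : Finset (Fin 4))) 0 1 := by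
    simp only [envies01_iff, envies10_iff, bval_empty, bval_single, bv01, bv02, bv03, bv12, bv13, bv23, bv012, bv013, bv023, bv123, bv0123]
    push_neg
    linarith [nn0 0, nn0 1, nn0 2, nn0 3, nn1 0, nn1 1, nn1 2, nn1 3]
  rw [resolve5_stop (Or.inl e9)] at s4
  rw [Priority_eq b, s4]
  rfl

lemma leaf_P (b : Fin 2 → Bid 4) (ha : (b 0).val 2 ≤ (b 0).val 0 + (b 0).val 1) (hc0 : (b 1).val 0 = 0) (hc1 : (b 1).val 1 = 2) (hc2 : (b 1).val 2 = 1) (hc3 : (b 1).val 3 = 2) :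
    Priority b 1 = ({2,3} : Finset (Fin 4)) := by
  have nn0 := (b 0).nonneg
  have nn1 := (b 1).nonneg
  have s1 := pstate_one b
  have e1 : ¬ envies b (alloc ({0} : Finset (Fin 4)) (∅ : Finset (Fin 4))) 1 0 := by
    simp only [envies01_iff, envies10_iff, bval_empty, bval_single, bv01, bv02, bv03, bv12, bv13, bv23, bv012, bv013, bv023, bv123, bv0123]
    push_neg
    linarith [nn0 0, nn0 1, nn0 2, nn0 3, nn1 0, nn1 1, nn1 2, nn1 3]
  have s2 := pstate_succ0 s1 hne123 1 hmin123 (priAgent_nn (nenv01_empty b ({0} : Finset (Fin 4))) e1)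
  rw [show (insert (1:Fin 4) ({0} : Finset (Fin 4))) = ({0,1} : Finset (Fin 4)) from by decide, he1] at s2
  rw [resolve5_stop (Or.inl (nenv01_empty b ({0,1} : Finset (Fin 4))))] at s2
  have e2 : envies b (alloc ({0,1} : Finset (Fin 4)) (∅ : Finset (Fin 4))) 1 0 := by
    simp only [envies01_iff, envies10_iff, bval_empty, bval_single, bv01, bv02, bv03, bv12, bv13, bv23, bv012, bv013, bv023, bv123, bv0123]
    linarith [nn0 0, nn0 1, nn0 2, nn0 3, nn1 0, nn1 1, nn1 2, nn1 3]
  have s3 := pstate_succ1 s2 hne23 2 hmin23 (priAgent_10 (nenv01_empty b ({0,1} : Finset (Fin 4))) e2)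
  rw [show (insert (2:Fin 4) (∅ : Finset (Fin 4))) = ({2} : Finset (Fin 4)) from by decide, he2] at s3
  have e3 : ¬ envies b (alloc ({0,1} : Finset (Fin 4)) ({2} : Finset (Fin 4))) 0 1 := by
    simp only [envies01_iff, envies10_iff, bval_empty, bval_single, bv01, bv02, bv03, bv12, bv13, bv23, bv012, bv013, bv023, bv123, bv0123]
    push_neg
    linarith [nn0 0, nn0 1, nn0 2, nn0 3, nn1 0, nn1 1, nn1 2, nn1 3]
  rw [resolve5_stop (Or.inl e3)] at s3
  have e4 : ¬ envies b (alloc ({0,1} : Finset (Fin 4)) ({2} : Finset (Fin 4))) 0 1 := by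
    simp only [envies01_iff, envies10_iff, bval_empty, bval_single, bv01, bv02, bv03, bv12, bv13, bv23, bv012, bv013, bv023, bv123, bv0123]
    push_neg
    linarith [nn0 0, nn0 1, nn0 2, nn0 3, nn1 0, nn1 1, nn1 2, nn1 3]
  have e5 : envies b (alloc ({0,1} : Finset (Fin 4)) ({2} : Finset (Fin 4))) 1 0 := by
    simp only [envies01_iff, envies10_iff, bval_empty, bval_single, bv01, bv02, bv03, bv12, bv13, bv23, bv012, bv013, bv023, bv123, bv0123]
    linarith [nn0 0, nn0 1, nn0 2, nn0 3, nn1 0, nn1 1, nn1 2, nn1 3]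
  have s4 := pstate_succ1 s3 hne3 3 hmin3 (priAgent_10 e4 e5)
  rw [show (insert (3:Fin 4) ({2} : Finset (Fin 4))) = ({2,3} : Finset (Fin 4)) from by decide, he3] at s4
  have e6 : ¬ envies b (alloc ({0,1} : Finset (Fin 4)) ({2,3} : Finset (Fin 4))) 1 0 := by
    simp only [envies01_iff, envies10_iff, bval_empty, bval_single, bv01, bv02, bv03, bv12, bv13, bv23, bv012, bv013, bv023, bv123, bv0123]
    push_neg
    linarith [nn0 0, nn0 1, nn0 2, nn0 3, nn1 0, nn1 1, nn1 2, nn1 3]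
  rw [resolve5_stop (Or.inr e6)] at s4
  rw [Priority_eq b, s4]
  rfl

lemma leaf_Q (b : Fin 2 → Bid 4) (ha : (b 0).val 0 + (b 0).val 1 < (b 0).val 2) (ha' : (b 0).val 1 ≤ (b 0).val 0) (hc0 : (b 1).val 0 = 1) (hc1 : (b 1).val 1 = 0) (hc2 : (b 1).val 2 = 1) (hc3 : (b 1).val 3 = 0) :
    Priority b 1 = ({1,2} : Finset (Fin 4)) := by
  have nn0 := (b 0).nonneg
  have nn1 := (b 1).nonneg
  have s1 := pstate_one b
  have e1 : envies b (alloc ({0} : Finset (Fin 4)) (∅ : Finset (Fin 4))) 1 0 := by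
    simp only [envies01_iff, envies10_iff, bval_empty, bval_single, bv01, bv02, bv03, bv12, bv13, bv23, bv012, bv013, bv023, bv123, bv0123]
    linarith [nn0 0, nn0 1, nn0 2, nn0 3, nn1 0, nn1 1, nn1 2, nn1 3]
  have s2 := pstate_succ1 s1 hne123 1 hmin123 (priAgent_10 (nenv01_empty b ({0} : Finset (Fin 4))) e1)
  rw [show (insert (1:Fin 4) (∅ : Finset (Fin 4))) = ({1} : Finset (Fin 4)) from by decide, he1] at s2
  have e2 : ¬ envies b (alloc ({0} : Finset (Fin 4)) ({1} : Finset (Fin 4))) 0 1 := by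
    simp only [envies01_iff, envies10_iff, bval_empty, bval_single, bv01, bv02, bv03, bv12, bv13, bv23, bv012, bv013, bv023, bv123, bv0123]
    push_neg
    linarith [nn0 0, nn0 1, nn0 2, nn0 3, nn1 0, nn1 1, nn1 2, nn1 3]
  rw [resolve5_stop (Or.inl e2)] at s2
  have e3 : ¬ envies b (alloc ({0} : Finset (Fin 4)) ({1} : Finset (Fin 4))) 0 1 := by
    simp only [envies01_iff, envies10_iff, bval_empty, bval_single, bv01, bv02, bv03, bv12, bv13, bv23, bv012, bv013, bv023, bv123, bv0123]
    push_neg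
    linarith [nn0 0, nn0 1, nn0 2, nn0 3, nn1 0, nn1 1, nn1 2, nn1 3]
  have e4 : envies b (alloc ({0} : Finset (Fin 4)) ({1} : Finset (Fin 4))) 1 0 := by
    simp only [envies01_iff, envies10_iff, bval_empty, bval_single, bv01, bv02, bv03, bv12, bv13, bv23, bv012, bv013, bv023, bv123, bv0123]
    linarith [nn0 0, nn0 1, nn0 2, nn0 3, nn1 0, nn1 1, nn1 2, nn1 3]
  have s3 := pstate_succ1 s2 hne23 2 hmin23 (priAgent_10 e3 e4)
  rw [show (insert (2:Fin 4) ({1} : Finset (Fin 4))) = ({1,2} : Finset (Fin 4)) from by decide, he2] at s3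
  have e5 : ¬ envies b (alloc ({0} : Finset (Fin 4)) ({1,2} : Finset (Fin 4))) 1 0 := by
    simp only [envies01_iff, envies10_iff, bval_empty, bval_single, bv01, bv02, bv03, bv12, bv13, bv23, bv012, bv013, bv023, bv123, bv0123]
    push_neg
    linarith [nn0 0, nn0 1, nn0 2, nn0 3, nn1 0, nn1 1, nn1 2, nn1 3]
  rw [resolve5_stop (Or.inr e5)] at s3
  have e6 : envies b (alloc ({0} : Finset (Fin 4)) ({1,2} : Finset (Fin 4))) 0 1 := by
    simp only [envies01_iff, envies10_iff, bval_empty, bval_single, bv01, bv02, bv03, bv12, bv13, bv23, bv012, bv013, bv023, bv123, bv0123]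
    linarith [nn0 0, nn0 1, nn0 2, nn0 3, nn1 0, nn1 1, nn1 2, nn1 3]
  have e7 : ¬ envies b (alloc ({0} : Finset (Fin 4)) ({1,2} : Finset (Fin 4))) 1 0 := by
    simp only [envies01_iff, envies10_iff, bval_empty, bval_single, bv01, bv02, bv03, bv12, bv13, bv23, bv012, bv013, bv023, bv123, bv0123]
    push_neg
    linarith [nn0 0, nn0 1, nn0 2, nn0 3, nn1 0, nn1 1, nn1 2, nn1 3]
  have s4 := pstate_succ0 s3 hne3 3 hmin3 (priAgent_01 e6 e7)
  rw [show (insert (3:Fin 4) ({0} : Finset (Fin 4))) = ({0,3} : Finset (Fin 4)) from by decide, he3] at s4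
  have e8 : ¬ envies b (alloc ({0,3} : Finset (Fin 4)) ({1,2} : Finset (Fin 4))) 1 0 := by
    simp only [envies01_iff, envies10_iff, bval_empty, bval_single, bv01, bv02, bv03, bv12, bv13, bv23, bv012, bv013, bv023, bv123, bv0123]
    push_neg
    linarith [nn0 0, nn0 1, nn0 2, nn0 3, nn1 0, nn1 1, nn1 2, nn1 3]
  rw [resolve5_stop (Or.inr e8)] at s4
  rw [Priority_eq b, s4]
  rfl

lemma leaf_R (b : Fin 2 → Bid 4) (ha : (b 0).val 0 + (b 0).val 1 < (b 0).val 2) (ha' : (b 0).val 0 < (b 0).val 1) (hc0 : (b 1).val 0 = 1) (hc1 : (b 1).val 1 = 1) (hc2 : (b 1).val 2 = 9) (hc3 : (b 1).val 3 = 9) :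
    Priority b 1 = ({1,3} : Finset (Fin 4)) := by
  have nn0 := (b 0).nonneg
  have nn1 := (b 1).nonneg
  have s1 := pstate_one b
  have e1 : envies b (alloc ({0} : Finset (Fin 4)) (∅ : Finset (Fin 4))) 1 0 := by
    simp only [envies01_iff, envies10_iff, bval_empty, bval_single, bv01, bv02, bv03, bv12, bv13, bv23, bv012, bv013, bv023, bv123, bv0123]
    linarith [nn0 0, nn0 1, nn0 2, nn0 3, nn1 0, nn1 1, nn1 2, nn1 3]
  have s2 := pstate_succ1 s1 hne123 1 hmin123 (priAgent_10 (nenv01_empty b ({0} : Finset (Fin 4))) e1)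
  rw [show (insert (1:Fin 4) (∅ : Finset (Fin 4))) = ({1} : Finset (Fin 4)) from by decide, he1] at s2
  have e2 : ¬ envies b (alloc ({0} : Finset (Fin 4)) ({1} : Finset (Fin 4))) 1 0 := by
    simp only [envies01_iff, envies10_iff, bval_empty, bval_single, bv01, bv02, bv03, bv12, bv13, bv23, bv012, bv013, bv023, bv123, bv0123]
    push_neg
    linarith [nn0 0, nn0 1, nn0 2, nn0 3, nn1 0, nn1 1, nn1 2, nn1 3]
  rw [resolve5_stop (Or.inr e2)] at s2
  have e3 : envies b (alloc ({0} : Finset (Fin 4)) ({1} : Finset (Fin 4))) 0 1 := by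
    simp only [envies01_iff, envies10_iff, bval_empty, bval_single, bv01, bv02, bv03, bv12, bv13, bv23, bv012, bv013, bv023, bv123, bv0123]
    linarith [nn0 0, nn0 1, nn0 2, nn0 3, nn1 0, nn1 1, nn1 2, nn1 3]
  have e4 : ¬ envies b (alloc ({0} : Finset (Fin 4)) ({1} : Finset (Fin 4))) 1 0 := by
    simp only [envies01_iff, envies10_iff, bval_empty, bval_single, bv01, bv02, bv03, bv12, bv13, bv23, bv012, bv013, bv023, bv123, bv0123]
    push_neg
    linarith [nn0 0, nn0 1, nn0 2, nn0 3, nn1 0, nn1 1, nn1 2, nn1 3]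
  have s3 := pstate_succ0 s2 hne23 2 hmin23 (priAgent_01 e3 e4)
  rw [show (insert (2:Fin 4) ({0} : Finset (Fin 4))) = ({0,2} : Finset (Fin 4)) from by decide, he2] at s3
  have e5 : ¬ envies b (alloc ({0,2} : Finset (Fin 4)) ({1} : Finset (Fin 4))) 0 1 := by
    simp only [envies01_iff, envies10_iff, bval_empty, bval_single, bv01, bv02, bv03, bv12, bv13, bv23, bv012, bv013, bv023, bv123, bv0123]
    push_neg
    linarith [nn0 0, nn0 1, nn0 2, nn0 3, nn1 0, nn1 1, nn1 2, nn1 3]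
  rw [resolve5_stop (Or.inl e5)] at s3
  have e6 : ¬ envies b (alloc ({0,2} : Finset (Fin 4)) ({1} : Finset (Fin 4))) 0 1 := by
    simp only [envies01_iff, envies10_iff, bval_empty, bval_single, bv01, bv02, bv03, bv12, bv13, bv23, bv012, bv013, bv023, bv123, bv0123]
    push_neg
    linarith [nn0 0, nn0 1, nn0 2, nn0 3, nn1 0, nn1 1, nn1 2, nn1 3]
  have e7 : envies b (alloc ({0,2} : Finset (Fin 4)) ({1} : Finset (Fin 4))) 1 0 := by
    simp only [envies01_iff, envies10_iff, bval_empty, bval_single, bv01, bv02, bv03, bv12, bv13, bv23, bv012, bv013, bv023, bv123, bv0123]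
    linarith [nn0 0, nn0 1, nn0 2, nn0 3, nn1 0, nn1 1, nn1 2, nn1 3]
  have s4 := pstate_succ1 s3 hne3 3 hmin3 (priAgent_10 e6 e7)
  rw [show (insert (3:Fin 4) ({1} : Finset (Fin 4))) = ({1,3} : Finset (Fin 4)) from by decide, he3] at s4
  have e8 : ¬ envies b (alloc ({0,2} : Finset (Fin 4)) ({1,3} : Finset (Fin 4))) 1 0 := by
    simp only [envies01_iff, envies10_iff, bval_empty, bval_single, bv01, bv02, bv03, bv12, bv13, bv23, bv012, bv013, bv023, bv123, bv0123]
    push_neg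
    linarith [nn0 0, nn0 1, nn0 2, nn0 3, nn1 0, nn1 1, nn1 2, nn1 3]
  rw [resolve5_stop (Or.inr e8)] at s4
  rw [Priority_eq b, s4]
  rfl

noncomputable def bid4 (x0 x1 x2 x3 : ℝ) (h0 : 0 ≤ x0) (h1 : 0 ≤ x1) (h2 : 0 ≤ x2)
    (h3 : 0 ≤ x3) : Bid 4 :=
  ⟨fun g => if g = 0 then x0 else if g = 1 then x1 else if g = 2 then x2 else x3,
   by intro g; fin_cases g <;> simp [h0, h1, h2, h3], 1⟩

variable {x0 x1 x2 x3 : ℝ} {h0 : 0 ≤ x0} {h1 : 0 ≤ x1} {h2 : 0 ≤ x2} {h3 : 0 ≤ x3}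

lemma bid4_val0 : (bid4 x0 x1 x2 x3 h0 h1 h2 h3).val 0 = x0 := rfl
lemma bid4_val1 : (bid4 x0 x1 x2 x3 h0 h1 h2 h3).val 1 = x1 := rfl
lemma bid4_val2 : (bid4 x0 x1 x2 x3 h0 h1 h2 h3).val 2 = x2 := rfl
lemma bid4_val3 : (bid4 x0 x1 x2 x3 h0 h1 h2 h3).val 3 = x3 := rfl

lemma dev0 (b : Fin 2 → Bid 4) :
    ∃ b' : Bid 4, 2 ≤ value vv (Priority (Function.update b 0 b') 0) := by
  have hu1 : ∀ b' : Bid 4, (Function.update b 0 b') 1 = b 1 :=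
    fun b' => Function.update_of_ne (by decide) _ _
  have hu0 : ∀ b' : Bid 4, (Function.update b 0 b') 0 = b' :=
    fun b' => Function.update_self _ _ _
  have A : Bid 4 := bid4 0 0 1 1 le_rfl le_rfl zero_le_one zero_le_one
  rcases ((b 1).nonneg 0).eq_or_lt with hc0 | hc0
  · rcases ((b 1).nonneg 1).eq_or_lt with hc1 | hc1
    · rcases ((b 1).nonneg 2).eq_or_lt with hc2 | hc2
      · refine ⟨bid4 0 0 1 1 le_rfl le_rfl zero_le_one zero_le_one, ?_⟩
        rw [leaf_a2b _ (by rw [hu0]; rfl) (by rw [hu0]; rfl) (by rw [hu0]; rfl)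
          (by rw [hu0]; rfl) (by rw [hu1]; exact hc0.symm) (by rw [hu1]; exact hc1.symm)
          (by rw [hu1]; exact hc2.symm), val_0123]
        norm_num
      · refine ⟨bid4 0 0 1 1 le_rfl le_rfl zero_le_one zero_le_one, ?_⟩
        rw [leaf_a2a _ (by rw [hu0]; rfl) (by rw [hu0]; rfl) (by rw [hu0]; rfl)
          (by rw [hu0]; rfl) (by rw [hu1]; exact hc0.symm) (by rw [hu1]; exact hc1.symm)
          (by rw [hu1]; exact hc2), val_012]
    · rcases lt_or_ge ((b 1).val 2) ((b 1).val 1) with hc2 | hc2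
      · refine ⟨bid4 0 0 1 1 le_rfl le_rfl zero_le_one zero_le_one, ?_⟩
        rw [leaf_a1a _ (by rw [hu0]; rfl) (by rw [hu0]; rfl) (by rw [hu0]; rfl)
          (by rw [hu0]; rfl) (by rw [hu1]; exact hc0.symm) (by rw [hu1]; exact hc1)
          (by rw [hu1]; exact hc2), val_23]
      · refine ⟨bid4 0 0 1 1 le_rfl le_rfl zero_le_one zero_le_one, ?_⟩
        rw [leaf_a1b _ (by rw [hu0]; rfl) (by rw [hu0]; rfl) (by rw [hu0]; rfl)
          (by rw [hu0]; rfl) (by rw [hu1]; exact hc0.symm) (by rw [hu1]; exact hc1)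
          (by rw [hu1]; exact hc2), val_013]
  · rcases lt_or_ge ((b 1).val 1) ((b 1).val 0) with hc1 | hc1
    · rcases lt_or_ge ((b 1).val 0) ((b 1).val 1 + (b 1).val 2) with hc2 | hc2
      · refine ⟨bid4 0 1 0 0 le_rfl zero_le_one le_rfl le_rfl, ?_⟩
        rw [leaf_b1a _ (by rw [hu0]; rfl) (by rw [hu0]; rfl) (by rw [hu0]; rfl)
          (by rw [hu0]; rfl) (by rw [hu1]; exact hc0) (by rw [hu1]; exact hc1)
          (by rw [hu1]; exact hc2), val_12]
      · refine ⟨bid4 0 1 0 0 le_rfl zero_le_one le_rfl le_rfl, ?_⟩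
        rw [leaf_b1b _ (by rw [hu0]; rfl) (by rw [hu0]; rfl) (by rw [hu0]; rfl)
          (by rw [hu0]; rfl) (by rw [hu1]; exact hc0) (by rw [hu1]; exact hc1)
          (by rw [hu1]; exact hc2), val_123]
        norm_num
    · rcases le_or_gt ((b 1).val 0 + (b 1).val 2) ((b 1).val 1) with hc2 | hc2
      · refine ⟨bid4 0 0 1 1 le_rfl le_rfl zero_le_one zero_le_one, ?_⟩
        rw [leaf_b2a _ (by rw [hu0]; rfl) (by rw [hu0]; rfl) (by rw [hu0]; rfl)
          (by rw [hu0]; rfl) (by rw [hu1]; exact hc0) (by rw [hu1]; exact hc1)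
          (by rw [hu1]; exact hc2), val_023]
      · refine ⟨bid4 0 1 0 0 le_rfl zero_le_one le_rfl le_rfl, ?_⟩
        rw [leaf_b2b _ (by rw [hu0]; rfl) (by rw [hu0]; rfl) (by rw [hu0]; rfl)
          (by rw [hu0]; rfl) (by rw [hu1]; exact hc0) (by rw [hu1]; exact hc1)
          (by rw [hu1]; exact hc2), val_13]

lemma dev1 (b : Fin 2 → Bid 4) :
    ∃ b' : Bid 4, 2 ≤ value vv (Priority (Function.update b 1 b') 1) := by
  have hu0 : ∀ b' : Bid 4, (Function.update b 1 b') 0 = b 0 :=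
    fun b' => Function.update_of_ne (by decide) _ _
  have hu1 : ∀ b' : Bid 4, (Function.update b 1 b') 1 = b' :=
    fun b' => Function.update_self _ _ _
  rcases le_or_gt ((b 0).val 2) ((b 0).val 0 + (b 0).val 1) with ha | ha
  · refine ⟨bid4 0 2 1 2 le_rfl (by norm_num) zero_le_one (by norm_num), ?_⟩
    rw [leaf_P _ (by rw [hu0]; exact ha) (by rw [hu1]; rfl) (by rw [hu1]; rfl)
      (by rw [hu1]; rfl) (by rw [hu1]; rfl), val_23]
  · rcases le_or_gt ((b 0).val 1) ((b 0).val 0) with ha' | ha'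
    · refine ⟨bid4 1 0 1 0 zero_le_one le_rfl zero_le_one le_rfl, ?_⟩
      rw [leaf_Q _ (by rw [hu0]; exact ha) (by rw [hu0]; exact ha') (by rw [hu1]; rfl)
        (by rw [hu1]; rfl) (by rw [hu1]; rfl) (by rw [hu1]; rfl), val_12]
    · refine ⟨bid4 1 1 9 9 zero_le_one zero_le_one (by norm_num) (by norm_num), ?_⟩
      rw [leaf_R _ (by rw [hu0]; exact ha) (by rw [hu0]; exact ha') (by rw [hu1]; rfl)
        (by rw [hu1]; rfl) (by rw [hu1]; rfl) (by rw [hu1]; rfl), val_13]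
end ECE2

/-- For the instance with exactly 2 agents and 4 goods in which both
agents have the identical binary additive true valuation `v` with `v g₁ = 0` and
`v g₂ = v g₃ = v g₄ = 1`, Priority-E-C-E has no pure Nash equilibrium. -/
theorem priority_two_binary_four_goods_no_PNE (b : Fin 2 → Bid 4) :
    ∃ (i : Fin 2) (b' : Bid 4),
      value (fun g : Fin 4 => if g = 0 then (0 : ℝ) else 1) (Priority b i) <
        value (fun g : Fin 4 => if g = 0 then (0 : ℝ) else 1)
          (Priority (Function.update b i b') i) := by
  have hsum := ECE2.sum_le_three b
  rcases lt_or_ge (value ECE2.vv (Priority b 0)) 2 with h | h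
  · obtain ⟨b', hb'⟩ := ECE2.dev0 b
    exact ⟨0, b', lt_of_lt_of_le h hb'⟩
  · have h1 : value ECE2.vv (Priority b 1) < 2 := by linarith
    obtain ⟨b', hb'⟩ := ECE2.dev1 b
    exact ⟨1, b', lt_of_lt_of_le h1 hb'⟩
end
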